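/- arXiv:0712.2549 — 8 statements merged into one kernel-verified Lean document; each statement's English description precedes it below -/
import Mathlib

section
/- Let B be a right double extension of A with data (P, σ, δ, τ). Then σ is a k-algebra homomorphism from A to the 2×2 matrix algebra M₂(A): σᵢⱼ(1) = 1 if i = j and 0 if i ≠ j, and σᵢⱼ(rs) = σᵢ₁(r)σ₁ⱼ(s) + σᵢ₂(r)σ₂ⱼ(s) for all r, s ∈ A and i, j ∈ {1,2}; and δ is a σ-derivation: δᵢ(1) = 0 and δᵢ(rs) = σᵢ₁(r)δ₁(s) + σᵢ₂(r)δ₂(s) + δᵢ(r)·s for all r, s ∈ A and i = 1, 2. -/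
/-- A right double extension `B` of a subalgebra `A ⊆ B` with DE-data `(P, σ, δ, τ)`:
(R1) `y₂y₁ = p₁₂·y₁y₂ + p₁₁·y₁² + τ₁y₁ + τ₂y₂ + τ₀`;
(R2) `yᵢ·r = σᵢ₁(r)y₁ + σᵢ₂(r)y₂ + δᵢ(r)` for all `r ∈ A`, `i = 1, 2`;
(Basis) the monomials `y₁^{n₁}y₂^{n₂}` form a basis of `B` as a left `A`-module, i.e.
every element of `B` is uniquely a finite `A`-linear combination of the
`y₁^{n₁}y₂^{n₂}`. -/
structure RightDoubleExtension (k : Type*) [Field k] {B : Type*} [Ring B] [Algebra k B]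
    (A : Subalgebra k B) where
  y₁ : B
  y₂ : B
  σ₁₁ : A →ₗ[k] A
  σ₁₂ : A →ₗ[k] A
  σ₂₁ : A →ₗ[k] A
  σ₂₂ : A →ₗ[k] A
  δ₁ : A →ₗ[k] A
  δ₂ : A →ₗ[k] A
  p₁₂ : k
  p₁₁ : k
  τ₁ : A
  τ₂ : A
  τ₀ : A
  R1 : y₂ * y₁ = p₁₂ • (y₁ * y₂) + p₁₁ • (y₁ * y₁)
      + (τ₁ : B) * y₁ + (τ₂ : B) * y₂ + (τ₀ : B)
  R2₁ : ∀ r : A, y₁ * (r : B) = (σ₁₁ r : B) * y₁ + (σ₁₂ r : B) * y₂ + (δ₁ r : B)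
  R2₂ : ∀ r : A, y₂ * (r : B) = (σ₂₁ r : B) * y₁ + (σ₂₂ r : B) * y₂ + (δ₂ r : B)
  basis : ∀ b : B, ∃! f : ℕ × ℕ →₀ A,
      b = f.sum fun n a => (a : B) * (y₁ ^ n.1 * y₂ ^ n.2)

/-!
Expand `yᵢ·(rs)` in two ways: directly by (R2), and as `(yᵢ·r)·s` by applying (R2) to `r` and
then to `s`. Both give an expression `a·y₁ + b·y₂ + c` with `a, b, c ∈ A`, whose coefficients are
unique by (Basis); comparing them yields the product rules. The unit conditions come from
comparing `yᵢ·1` with `yᵢ`.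
-/

namespace RightDoubleExtension

variable {k : Type*} [Field k] {B : Type*} [Ring B] [Algebra k B] {A : Subalgebra k B}
  (E : RightDoubleExtension k A)

lemma sum_single_monomials (a b c : A) :
    (Finsupp.single (1, 0) a + Finsupp.single (0, 1) b + Finsupp.single (0, 0) c).sum
        (fun n x => (x : B) * (E.y₁ ^ n.1 * E.y₂ ^ n.2)) =
      (a : B) * E.y₁ + (b : B) * E.y₂ + (c : B) := by
  simp [Finsupp.sum_add_index', add_mul]

lemma coeffs_unique {a b c a' b' c' : A}
    (h : (a : B) * E.y₁ + (b : B) * E.y₂ + (c : B) = (a' : B) * E.y₁ + (b' : B) * E.y₂ + (c' : B)) :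
    a = a' ∧ b = b' ∧ c = c' := by
  have hf := (E.basis _).unique (E.sum_single_monomials a b c).symm
    (h.trans (E.sum_single_monomials a' b' c').symm)
  exact ⟨by simpa using DFunLike.congr_fun hf (1, 0), by simpa using DFunLike.congr_fun hf (0, 1),
    by simpa using DFunLike.congr_fun hf (0, 0)⟩

variable {y : B} {s₁ s₂ d : A → A}
  (hy : ∀ r : A, y * r = (s₁ r : B) * E.y₁ + (s₂ r : B) * E.y₂ + (d r : B))
include hy

lemma row_one_of_commutation (a b c : A) (h : y = (a : B) * E.y₁ + (b : B) * E.y₂ + (c : B)) :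
    s₁ 1 = a ∧ s₂ 1 = b ∧ d 1 = c :=
  E.coeffs_unique (by rw [← hy 1, ← h, OneMemClass.coe_one, mul_one])

lemma row_mul_of_commutation (r s : A) :
    s₁ (r * s) = s₁ r * E.σ₁₁ s + s₂ r * E.σ₂₁ s ∧
    s₂ (r * s) = s₁ r * E.σ₁₂ s + s₂ r * E.σ₂₂ s ∧
    d (r * s) = s₁ r * E.δ₁ s + s₂ r * E.δ₂ s + d r * s := by
  apply E.coeffs_unique
  calc (s₁ (r * s) : B) * E.y₁ + (s₂ (r * s) : B) * E.y₂ + (d (r * s) : B)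
      = y * r * s := by rw [← hy, MulMemClass.coe_mul, mul_assoc]
    _ = (s₁ r : B) * (E.y₁ * s) + (s₂ r : B) * (E.y₂ * s) + (d r : B) * s := by
      rw [hy]; noncomm_ring
    _ = _ := by rw [E.R2₁, E.R2₂]; push_cast; noncomm_ring

end RightDoubleExtension

/-- In a right double extension, `σ` is a `k`-algebra homomorphism `A → M₂(A)` and
`δ` is a `σ`-derivation. -/
theorem sigma_algHom_delta_derivation
    {k : Type*} [Field k] {B : Type*} [Ring B] [Algebra k B]
    {A : Subalgebra k B} (E : RightDoubleExtension k A) :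
    (E.σ₁₁ 1 = 1 ∧ E.σ₁₂ 1 = 0 ∧ E.σ₂₁ 1 = 0 ∧ E.σ₂₂ 1 = 1) ∧
    (∀ r s : A,
      E.σ₁₁ (r * s) = E.σ₁₁ r * E.σ₁₁ s + E.σ₁₂ r * E.σ₂₁ s ∧
      E.σ₁₂ (r * s) = E.σ₁₁ r * E.σ₁₂ s + E.σ₁₂ r * E.σ₂₂ s ∧
      E.σ₂₁ (r * s) = E.σ₂₁ r * E.σ₁₁ s + E.σ₂₂ r * E.σ₂₁ s ∧
      E.σ₂₂ (r * s) = E.σ₂₁ r * E.σ₁₂ s + E.σ₂₂ r * E.σ₂₂ s) ∧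
    (E.δ₁ 1 = 0 ∧ E.δ₂ 1 = 0) ∧
    (∀ r s : A,
      E.δ₁ (r * s) = E.σ₁₁ r * E.δ₁ s + E.σ₁₂ r * E.δ₂ s + E.δ₁ r * s ∧
      E.δ₂ (r * s) = E.σ₂₁ r * E.δ₁ s + E.σ₂₂ r * E.δ₂ s + E.δ₂ r * s) := by
  obtain ⟨h₁₁, h₁₂, hδ₁⟩ := E.row_one_of_commutation E.R2₁ 1 0 0 (by simp)
  obtain ⟨h₂₁, h₂₂, hδ₂⟩ := E.row_one_of_commutation E.R2₂ 0 1 0 (by simp)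
  have row₁ := E.row_mul_of_commutation E.R2₁
  have row₂ := E.row_mul_of_commutation E.R2₂
  exact ⟨⟨h₁₁, h₁₂, h₂₁, h₂₂⟩,
    fun r s => ⟨(row₁ r s).1, (row₁ r s).2.1, (row₂ r s).1, (row₂ r s).2.1⟩,
    ⟨hδ₁, hδ₂⟩, fun r s => ⟨(row₁ r s).2.2, (row₂ r s).2.2⟩⟩
end

section
/- Let B be a right double extension of A with data (P, σ, δ, τ). Then σ is invertible if and only if both of the following hold: (i) A·y₁ + A·y₂ + A = y₁·A + y₂·A + A as subsets of B, and (ii) whenever a, b, c ∈ A satisfy y₁a + y₂b + c = 0 in B, then a = b = c = 0 (i.e. {1, y₁, y₂} is a basis of this set as a right A-module). In particular, if B is also a left double extension (a double extension), then σ is invertible. -/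
/-- `σ` is invertible: there is a `k`-algebra homomorphism `φ = (φᵢⱼ) : A → M₂(A)` with
`φⱼ₁σᵢ₁ + φⱼ₂σᵢ₂ = δᵢⱼ · id` and `σ₁ⱼφ₁ᵢ + σ₂ⱼφ₂ᵢ = δᵢⱼ · id`. -/
def SigmaInvertible {k : Type*} [Field k] {B : Type*} [Ring B] [Algebra k B]
    {A : Subalgebra k B} (E : RightDoubleExtension k A) : Prop :=
  ∃ φ₁₁ φ₁₂ φ₂₁ φ₂₂ : A →ₗ[k] A,
    (φ₁₁ 1 = 1 ∧ φ₁₂ 1 = 0 ∧ φ₂₁ 1 = 0 ∧ φ₂₂ 1 = 1) ∧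
    (∀ r s : A,
      φ₁₁ (r * s) = φ₁₁ r * φ₁₁ s + φ₁₂ r * φ₂₁ s ∧
      φ₁₂ (r * s) = φ₁₁ r * φ₁₂ s + φ₁₂ r * φ₂₂ s ∧
      φ₂₁ (r * s) = φ₂₁ r * φ₁₁ s + φ₂₂ r * φ₂₁ s ∧
      φ₂₂ (r * s) = φ₂₁ r * φ₁₂ s + φ₂₂ r * φ₂₂ s) ∧
    (∀ r : A,
      φ₁₁ (E.σ₁₁ r) + φ₁₂ (E.σ₁₂ r) = r ∧
      φ₂₁ (E.σ₁₁ r) + φ₂₂ (E.σ₁₂ r) = 0 ∧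
      φ₁₁ (E.σ₂₁ r) + φ₁₂ (E.σ₂₂ r) = 0 ∧
      φ₂₁ (E.σ₂₁ r) + φ₂₂ (E.σ₂₂ r) = r) ∧
    (∀ r : A,
      E.σ₁₁ (φ₁₁ r) + E.σ₂₁ (φ₂₁ r) = r ∧
      E.σ₁₂ (φ₁₁ r) + E.σ₂₂ (φ₂₁ r) = 0 ∧
      E.σ₁₁ (φ₁₂ r) + E.σ₂₁ (φ₂₂ r) = 0 ∧
      E.σ₁₂ (φ₁₂ r) + E.σ₂₂ (φ₂₂ r) = r)

theorem coeffs_eq_of_existsUnique_sum {ι M N : Type*} [AddCommMonoid M] [AddCommMonoid N]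
    (F : ι → M →+ N) (hF : ∀ b : N, ∃! f : ι →₀ M, b = f.sum fun i m => F i m)
    {i j l : ι} (hij : i ≠ j) (hil : i ≠ l) (hjl : j ≠ l) {a b c a' b' c' : M}
    (h : F i a + F j b + F l c = F i a' + F j b' + F l c') :
    a = a' ∧ b = b' ∧ c = c' := by
  have hsum : ∀ x y z : M,
      (Finsupp.single i x + Finsupp.single j y + Finsupp.single l z).sum (fun i m => F i m)
        = F i x + F j y + F l z := by
    intro x y z
    simp [Finsupp.sum_add_index', Finsupp.sum_single_index]
  have hf := (hF _).unique (hsum a b c).symm (h.trans (hsum a' b' c').symm)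
  have hcoeff := fun p => DFunLike.congr_fun hf p
  refine ⟨?_, ?_, ?_⟩
  · simpa [Finsupp.single_apply, hij, hil] using hcoeff i
  · simpa [Finsupp.single_apply, hij.symm, hjl] using hcoeff j
  · simpa [Finsupp.single_apply, hil.symm, hjl.symm] using hcoeff l

namespace RightDoubleExtension

variable {k : Type*} [Field k] {B : Type*} [Ring B] [Algebra k B] {A : Subalgebra k B}
  (E : RightDoubleExtension k A)

def leftComb (a b c : A) : B := a * E.y₁ + b * E.y₂ + c

def rightComb (a b c : A) : B := E.y₁ * a + E.y₂ * b + c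

def leftSpan : Set B := {w | ∃ a b c : A, w = E.leftComb a b c}

def rightSpan : Set B := {w | ∃ a b c : A, w = E.rightComb a b c}

def RightIndependent : Prop := ∀ a b c : A, E.rightComb a b c = 0 → a = 0 ∧ b = 0 ∧ c = 0

theorem leftComb_injective {a b c a' b' c' : A} (h : E.leftComb a b c = E.leftComb a' b' c') :
    a = a' ∧ b = b' ∧ c = c' := by
  let F : ℕ × ℕ → A →+ B := fun n =>
    (AddMonoidHom.mulRight (E.y₁ ^ n.1 * E.y₂ ^ n.2)).comp A.val.toAddMonoidHom
  refine coeffs_eq_of_existsUnique_sum F E.basis (i := (1, 0)) (j := (0, 1)) (l := (0, 0))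
    (by decide) (by decide) (by decide) ?_
  simpa [F, leftComb] using h

theorem rightComb_injective_of_basis
    (hb : ∀ b : B, ∃! f : ℕ × ℕ →₀ A,
      b = f.sum fun n a => (E.y₂ ^ n.1 * E.y₁ ^ n.2) * (a : B))
    {a b c a' b' c' : A} (h : E.rightComb a b c = E.rightComb a' b' c') :
    a = a' ∧ b = b' ∧ c = c' := by
  let F : ℕ × ℕ → A →+ B := fun n =>
    (AddMonoidHom.mulLeft (E.y₂ ^ n.1 * E.y₁ ^ n.2)).comp A.val.toAddMonoidHom
  refine coeffs_eq_of_existsUnique_sum F hb (i := (0, 1)) (j := (1, 0)) (l := (0, 0))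
    (by decide) (by decide) (by decide) ?_
  simpa [F, rightComb] using h

theorem rightComb_sub (a b c a' b' c' : A) :
    E.rightComb (a - a') (b - b') (c - c') = E.rightComb a b c - E.rightComb a' b' c' := by
  simp only [rightComb, Subalgebra.coe_sub]
  noncomm_ring

theorem rightComb_add (a b c a' b' c' : A) :
    E.rightComb (a + a') (b + b') (c + c') = E.rightComb a b c + E.rightComb a' b' c' := by
  simp only [rightComb, Subalgebra.coe_add]
  noncomm_ring

theorem rightComb_smul (t : k) (a b c : A) :
    E.rightComb (t • a) (t • b) (t • c) = t • E.rightComb a b c := by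
  simp only [rightComb, Subalgebra.coe_smul, mul_smul_comm, smul_add]

theorem rightComb_mul (a b c d : A) :
    E.rightComb a b c * d = E.rightComb (a * d) (b * d) (c * d) := by
  simp only [rightComb, Subalgebra.coe_mul, add_mul, mul_assoc]

theorem rightComb_add_coe (a b c d : A) :
    E.rightComb a b c + d = E.rightComb a b (c + d) := by
  simp only [rightComb, Subalgebra.coe_add, add_assoc]

theorem RightIndependent.injective {E : RightDoubleExtension k A} (hind : E.RightIndependent)
    {a b c a' b' c' : A} (h : E.rightComb a b c = E.rightComb a' b' c') :
    a = a' ∧ b = b' ∧ c = c' := by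
  obtain ⟨h₁, h₂, h₃⟩ := hind _ _ _ ((E.rightComb_sub ..).trans (sub_eq_zero.mpr h))
  exact ⟨sub_eq_zero.mp h₁, sub_eq_zero.mp h₂, sub_eq_zero.mp h₃⟩

theorem rightIndependent_of_basis
    (hb : ∀ b : B, ∃! f : ℕ × ℕ →₀ A,
      b = f.sum fun n a => (E.y₂ ^ n.1 * E.y₁ ^ n.2) * (a : B)) :
    E.RightIndependent := fun a b c h =>
  E.rightComb_injective_of_basis hb (h.trans (by simp [rightComb]))

theorem rightComb_eq_leftComb (a b c : A) :
    E.rightComb a b c =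
      E.leftComb (E.σ₁₁ a + E.σ₂₁ b) (E.σ₁₂ a + E.σ₂₂ b) (E.δ₁ a + E.δ₂ b + c) := by
  simp only [rightComb, leftComb, E.R2₁, E.R2₂, Subalgebra.coe_add]
  noncomm_ring

theorem rightSpan_subset_leftSpan : E.rightSpan ⊆ E.leftSpan := by
  rintro _ ⟨a, b, c, rfl⟩
  exact ⟨_, _, _, E.rightComb_eq_leftComb a b c⟩

section Coefficients

variable {E} {f₁₁ f₂₁ g₁ f₁₂ f₂₂ g₂ : A → A}

theorem leftComb_eq_rightComb
    (hf₁ : ∀ r : A, (r : B) * E.y₁ = E.rightComb (f₁₁ r) (f₂₁ r) (g₁ r))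
    (hf₂ : ∀ r : A, (r : B) * E.y₂ = E.rightComb (f₁₂ r) (f₂₂ r) (g₂ r)) (a b c : A) :
    E.leftComb a b c = E.rightComb (f₁₁ a + f₁₂ b) (f₂₁ a + f₂₂ b) (g₁ a + g₂ b + c) := by
  rw [← E.rightComb_add_coe, E.rightComb_add, ← hf₁, ← hf₂, leftComb]

theorem leftSpan_subset_rightSpan
    (h₁ : ∀ r : A, ∃ a b c : A, (r : B) * E.y₁ = E.rightComb a b c)
    (h₂ : ∀ r : A, ∃ a b c : A, (r : B) * E.y₂ = E.rightComb a b c) :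
    E.leftSpan ⊆ E.rightSpan := by
  choose f₁₁ f₂₁ g₁ hf₁ using h₁
  choose f₁₂ f₂₂ g₂ hf₂ using h₂
  rintro _ ⟨a, b, c, rfl⟩
  exact ⟨_, _, _, leftComb_eq_rightComb hf₁ hf₂ a b c⟩

theorem mul_rightComb
    (hf₁ : ∀ r : A, (r : B) * E.y₁ = E.rightComb (f₁₁ r) (f₂₁ r) (g₁ r))
    (hf₂ : ∀ r : A, (r : B) * E.y₂ = E.rightComb (f₁₂ r) (f₂₂ r) (g₂ r)) (r a b c : A) :
    (r : B) * E.rightComb a b c = E.rightComb (f₁₁ r * a + f₁₂ r * b) (f₂₁ r * a + f₂₂ r * b)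
      (g₁ r * a + g₂ r * b + r * c) := by
  calc (r : B) * E.rightComb a b c = (r * E.y₁) * a + (r * E.y₂) * b + ((r * c : A) : B) := by
        simp only [rightComb, Subalgebra.coe_mul]
        noncomm_ring
    _ = _ := by rw [hf₁, hf₂, rightComb_mul, rightComb_mul, ← rightComb_add, rightComb_add_coe]

theorem isLinearMap_coeffs {y : B} {f g h : A → A} (hind : E.RightIndependent)
    (hf : ∀ r : A, (r : B) * y = E.rightComb (f r) (g r) (h r)) :
    IsLinearMap k f ∧ IsLinearMap k g ∧ IsLinearMap k h := by
  have hadd (r s : A) := hind.injective <| show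
      E.rightComb (f (r + s)) (g (r + s)) (h (r + s))
        = E.rightComb (f r + f s) (g r + g s) (h r + h s) by
    rw [← hf, rightComb_add, ← hf, ← hf, Subalgebra.coe_add, add_mul]
  have hsmul (t : k) (r : A) := hind.injective <| show
      E.rightComb (f (t • r)) (g (t • r)) (h (t • r))
        = E.rightComb (t • f r) (t • g r) (t • h r) by
    rw [← hf, rightComb_smul, ← hf, Subalgebra.coe_smul, smul_mul_assoc]
  exact ⟨⟨fun r s => (hadd r s).1, fun t r => (hsmul t r).1⟩,
    ⟨fun r s => (hadd r s).2.1, fun t r => (hsmul t r).2.1⟩,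
    ⟨fun r s => (hadd r s).2.2, fun t r => (hsmul t r).2.2⟩⟩

theorem coeffs_one (hind : E.RightIndependent)
    (hf₁ : ∀ r : A, (r : B) * E.y₁ = E.rightComb (f₁₁ r) (f₂₁ r) (g₁ r))
    (hf₂ : ∀ r : A, (r : B) * E.y₂ = E.rightComb (f₁₂ r) (f₂₂ r) (g₂ r)) :
    f₁₁ 1 = 1 ∧ f₁₂ 1 = 0 ∧ f₂₁ 1 = 0 ∧ f₂₂ 1 = 1 := by
  have h₁ := hind.injective <| (hf₁ 1).symm.trans (show _ = E.rightComb 1 0 0 by simp [rightComb])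
  have h₂ := hind.injective <| (hf₂ 1).symm.trans (show _ = E.rightComb 0 1 0 by simp [rightComb])
  exact ⟨h₁.1, h₂.1, h₁.2.1, h₂.2.1⟩

theorem coeffs_mul (hind : E.RightIndependent)
    (hf₁ : ∀ r : A, (r : B) * E.y₁ = E.rightComb (f₁₁ r) (f₂₁ r) (g₁ r))
    (hf₂ : ∀ r : A, (r : B) * E.y₂ = E.rightComb (f₁₂ r) (f₂₂ r) (g₂ r)) (r s : A) :
    f₁₁ (r * s) = f₁₁ r * f₁₁ s + f₁₂ r * f₂₁ s ∧
    f₁₂ (r * s) = f₁₁ r * f₁₂ s + f₁₂ r * f₂₂ s ∧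
    f₂₁ (r * s) = f₂₁ r * f₁₁ s + f₂₂ r * f₂₁ s ∧
    f₂₂ (r * s) = f₂₁ r * f₁₂ s + f₂₂ r * f₂₂ s := by
  have h₁ := hind.injective <| (hf₁ (r * s)).symm.trans <| by
    rw [Subalgebra.coe_mul, mul_assoc, hf₁, mul_rightComb hf₁ hf₂]
  have h₂ := hind.injective <| (hf₂ (r * s)).symm.trans <| by
    rw [Subalgebra.coe_mul, mul_assoc, hf₂, mul_rightComb hf₁ hf₂]
  exact ⟨h₁.1, h₂.1, h₁.2.1, h₂.2.1⟩

theorem coeffs_comp_sigma (hind : E.RightIndependent)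
    (hf₁ : ∀ r : A, (r : B) * E.y₁ = E.rightComb (f₁₁ r) (f₂₁ r) (g₁ r))
    (hf₂ : ∀ r : A, (r : B) * E.y₂ = E.rightComb (f₁₂ r) (f₂₂ r) (g₂ r)) (r : A) :
    f₁₁ (E.σ₁₁ r) + f₁₂ (E.σ₁₂ r) = r ∧
    f₂₁ (E.σ₁₁ r) + f₂₂ (E.σ₁₂ r) = 0 ∧
    f₁₁ (E.σ₂₁ r) + f₁₂ (E.σ₂₂ r) = 0 ∧
    f₂₁ (E.σ₂₁ r) + f₂₂ (E.σ₂₂ r) = r := by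
  have h₁ := hind.injective <| (leftComb_eq_rightComb hf₁ hf₂ _ _ _).symm.trans <|
    (E.R2₁ r).symm.trans (show _ = E.rightComb r 0 0 by simp [rightComb])
  have h₂ := hind.injective <| (leftComb_eq_rightComb hf₁ hf₂ _ _ _).symm.trans <|
    (E.R2₂ r).symm.trans (show _ = E.rightComb 0 r 0 by simp [rightComb])
  exact ⟨h₁.1, h₁.2.1, h₂.1, h₂.2.1⟩

theorem sigma_comp_coeffs
    (hf₁ : ∀ r : A, (r : B) * E.y₁ = E.rightComb (f₁₁ r) (f₂₁ r) (g₁ r))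
    (hf₂ : ∀ r : A, (r : B) * E.y₂ = E.rightComb (f₁₂ r) (f₂₂ r) (g₂ r)) (r : A) :
    E.σ₁₁ (f₁₁ r) + E.σ₂₁ (f₂₁ r) = r ∧
    E.σ₁₂ (f₁₁ r) + E.σ₂₂ (f₂₁ r) = 0 ∧
    E.σ₁₁ (f₁₂ r) + E.σ₂₁ (f₂₂ r) = 0 ∧
    E.σ₁₂ (f₁₂ r) + E.σ₂₂ (f₂₂ r) = r := by
  have h₁ := E.leftComb_injective <| (E.rightComb_eq_leftComb ..).symm.trans <|
    (hf₁ r).symm.trans (show _ = E.leftComb r 0 0 by simp [leftComb])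
  have h₂ := E.leftComb_injective <| (E.rightComb_eq_leftComb ..).symm.trans <|
    (hf₂ r).symm.trans (show _ = E.leftComb 0 r 0 by simp [leftComb])
  exact ⟨h₁.1, h₁.2.1, h₂.1, h₂.2.1⟩

theorem sigmaInvertible_of_mul_eq_rightComb (hind : E.RightIndependent)
    (hf₁ : ∀ r : A, (r : B) * E.y₁ = E.rightComb (f₁₁ r) (f₂₁ r) (g₁ r))
    (hf₂ : ∀ r : A, (r : B) * E.y₂ = E.rightComb (f₁₂ r) (f₂₂ r) (g₂ r)) :
    SigmaInvertible E := by
  obtain ⟨lin₁₁, lin₂₁, -⟩ := isLinearMap_coeffs hind hf₁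
  obtain ⟨lin₁₂, lin₂₂, -⟩ := isLinearMap_coeffs hind hf₂
  exact ⟨IsLinearMap.mk' f₁₁ lin₁₁, IsLinearMap.mk' f₁₂ lin₁₂,
    IsLinearMap.mk' f₂₁ lin₂₁, IsLinearMap.mk' f₂₂ lin₂₂,
    coeffs_one hind hf₁ hf₂, coeffs_mul hind hf₁ hf₂, coeffs_comp_sigma hind hf₁ hf₂,
    sigma_comp_coeffs hf₁ hf₂⟩

end Coefficients

theorem _root_.SigmaInvertible.leftSpan_subset_rightSpan (h : SigmaInvertible E) :
    E.leftSpan ⊆ E.rightSpan := by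
  obtain ⟨φ₁₁, φ₁₂, φ₂₁, φ₂₂, -, -, -, hσφ⟩ := h
  refine E.leftSpan_subset_rightSpan (fun r => ?_) (fun r => ?_)
  · refine ⟨φ₁₁ r, φ₂₁ r, -(E.δ₁ (φ₁₁ r) + E.δ₂ (φ₂₁ r)), ?_⟩
    rw [rightComb_eq_leftComb, (hσφ r).1, (hσφ r).2.1]
    simp [leftComb]
  · refine ⟨φ₁₂ r, φ₂₂ r, -(E.δ₁ (φ₁₂ r) + E.δ₂ (φ₂₂ r)), ?_⟩
    rw [rightComb_eq_leftComb, (hσφ r).2.2.1, (hσφ r).2.2.2]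
    simp [leftComb]

theorem _root_.SigmaInvertible.rightIndependent (h : SigmaInvertible E) : E.RightIndependent := by
  obtain ⟨φ₁₁, φ₁₂, φ₂₁, φ₂₂, -, -, hφσ, -⟩ := h
  intro a b c habc
  obtain ⟨h₁, h₂, h₃⟩ := E.leftComb_injective <| (E.rightComb_eq_leftComb a b c).symm.trans <|
    habc.trans (show 0 = E.leftComb 0 0 0 by simp [leftComb])
  have ha : a = 0 := calc
    a = φ₁₁ (E.σ₁₁ a) + φ₁₂ (E.σ₁₂ a) + (φ₁₁ (E.σ₂₁ b) + φ₁₂ (E.σ₂₂ b)) := by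
      rw [(hφσ a).1, (hφσ b).2.2.1, add_zero]
    _ = φ₁₁ (E.σ₁₁ a + E.σ₂₁ b) + φ₁₂ (E.σ₁₂ a + E.σ₂₂ b) := by
      simp only [map_add]; abel
    _ = 0 := by rw [h₁, h₂, map_zero, map_zero, add_zero]
  have hb : b = 0 := calc
    b = φ₂₁ (E.σ₁₁ a) + φ₂₂ (E.σ₁₂ a) + (φ₂₁ (E.σ₂₁ b) + φ₂₂ (E.σ₂₂ b)) := by
      rw [(hφσ a).2.1, (hφσ b).2.2.2, zero_add]
    _ = φ₂₁ (E.σ₁₁ a + E.σ₂₁ b) + φ₂₂ (E.σ₁₂ a + E.σ₂₂ b) := by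
      simp only [map_add]; abel
    _ = 0 := by rw [h₁, h₂, map_zero, map_zero, add_zero]
  subst ha hb
  simpa using h₃

theorem sigmaInvertible_iff_leftSpan_eq_rightSpan :
    SigmaInvertible E ↔ E.leftSpan = E.rightSpan ∧ E.RightIndependent := by
  refine ⟨fun h => ⟨h.leftSpan_subset_rightSpan.antisymm E.rightSpan_subset_leftSpan,
    h.rightIndependent⟩, fun ⟨hspan, hind⟩ => ?_⟩
  have h₁ (r : A) : (r : B) * E.y₁ ∈ E.rightSpan := hspan ▸ ⟨r, 0, 0, by simp [leftComb]⟩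
  have h₂ (r : A) : (r : B) * E.y₂ ∈ E.rightSpan := hspan ▸ ⟨0, r, 0, by simp [leftComb]⟩
  choose f₁₁ f₂₁ g₁ hf₁ using h₁
  choose f₁₂ f₂₂ g₂ hf₂ using h₂
  exact sigmaInvertible_of_mul_eq_rightComb hind hf₁ hf₂

end RightDoubleExtension

/-- `σ` is invertible iff `Ay₁ + Ay₂ + A = y₁A + y₂A + A` and `{1, y₁, y₂}` is a right
`A`-basis of this set; in particular if `B` is also a left double extension (i.e. a
double extension) then `σ` is invertible. -/
theorem sigmaInvertible_iff
    {k : Type*} [Field k] {B : Type*} [Ring B] [Algebra k B]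
    {A : Subalgebra k B} (E : RightDoubleExtension k A) :
    (SigmaInvertible E ↔
      (({w : B | ∃ a b c : A, w = (a : B) * E.y₁ + (b : B) * E.y₂ + (c : B)} =
        {w : B | ∃ a b c : A, w = E.y₁ * (a : B) + E.y₂ * (b : B) + (c : B)}) ∧
       (∀ a b c : A, E.y₁ * (a : B) + E.y₂ * (b : B) + (c : B) = 0 →
          a = 0 ∧ b = 0 ∧ c = 0))) ∧
    (((∃ p'₁₂ p'₁₁ : k, ∃ τ'₁ τ'₂ τ'₀ : A,
        E.y₁ * E.y₂ = p'₁₂ • (E.y₂ * E.y₁) + p'₁₁ • (E.y₁ * E.y₁)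
          + E.y₁ * (τ'₁ : B) + E.y₂ * (τ'₂ : B) + (τ'₀ : B)) ∧
      (∀ b : B, ∃! f : ℕ × ℕ →₀ A,
        b = f.sum fun n a => (E.y₂ ^ n.1 * E.y₁ ^ n.2) * (a : B)) ∧
      (∀ r : A, ∃ a b c : A,
        (r : B) * E.y₁ = E.y₁ * (a : B) + E.y₂ * (b : B) + (c : B)) ∧
      (∀ r : A, ∃ a b c : A,
        (r : B) * E.y₂ = E.y₁ * (a : B) + E.y₂ * (b : B) + (c : B))) →
      SigmaInvertible E) := by
  refine ⟨E.sigmaInvertible_iff_leftSpan_eq_rightSpan, ?_⟩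
  rintro ⟨-, hb, h₁, h₂⟩
  exact E.sigmaInvertible_iff_leftSpan_eq_rightSpan.mpr
    ⟨(E.leftSpan_subset_rightSpan h₁ h₂).antisymm E.rightSpan_subset_leftSpan,
      E.rightIndependent_of_basis hb⟩
end

section
/- Assume B is a right double extension of A with data (P, σ, δ, τ) which carries an ℕ-grading B = ⊕_{n≥0} Bₙ making B a graded k-algebra with B₀ = k·1 and dim_k Bₙ < ∞ for all n, such that A is a graded subalgebra of B and y₁, y₂ are homogeneous of positive degree. If p₁₂ ≠ 0 and σ is invertible, then B is a double extension of A: (i) A·y₁ + A·y₂ + A = y₁·A + y₂·A + A; (ii) there exist τ'₁, τ'₂, τ'₀ ∈ A with y₁y₂ = p₁₂⁻¹·y₂y₁ − p₁₂⁻¹p₁₁·y₁² + y₁τ'₁ + y₂τ'₂ + τ'₀; and (iii) the monomials y₂^{n₁}y₁^{n₂} (n₁, n₂ ≥ 0) form a basis of B as a right A-module (every b ∈ B is uniquely a finite sum Σ y₂^{n₁}y₁^{n₂}·a_{n₁n₂} with a_{n₁n₂} ∈ A). -/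
/-!
Invertibility of `σ` lets one move a coefficient from the left of `y₁`, `y₂` to the right:
`r yᵢ ∈ y₁A + y₂A + A`. This gives (i) at once and, applied to `τ₁y₁ + τ₂y₂` in (R1) and
divided by `p₁₂`, the relation (ii). Using (ii) and the right commutation rules, an induction on
the total degree in `y₁, y₂` rewrites every `r y₁^i y₂^j` as a right `A`-combination of the
`y₂^a y₁^b` with `a + b ≤ i + j`, so these monomials span `B`.

Independence is a dimension count in each degree `n`. Let `V_n` be the coefficient families
`(a_p)` with `a_p ∈ A` homogeneous of degree `n - deg(y₂^{p.1} y₁^{p.2})`. Through the left basis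
`V_n` embeds into `B_n`, and through the right monomials it maps onto `B_n` (take degree-`n`
parts of any right expansion). As `dim B_n < ∞`, the latter map is injective. For a right
expansion of `0`, the suitably shifted homogeneous parts of its coefficients form, for each `n`,
an element of `V_n` in its kernel, so they all vanish.
-/

theorem LinearMap.injective_of_injective_of_surjective {k V U : Type*} [Field k]
    [AddCommGroup V] [Module k V] [AddCommGroup U] [Module k U] [FiniteDimensional k U]
    {L R : V →ₗ[k] U} (hL : Function.Injective L) (hR : Function.Surjective R) :
    Function.Injective R := by
  have : FiniteDimensional k V := Module.Finite.of_injective L hL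
  have hle := LinearMap.finrank_le_finrank_of_injective hL
  have hge := LinearMap.finrank_range_le R
  rw [LinearMap.range_eq_top.mpr hR, finrank_top] at hge
  exact (LinearMap.injective_iff_surjective_of_finrank_eq_finrank (le_antisymm hle hge)).mpr hR

namespace DoubleExtension

open Submodule DirectSum

variable {k : Type*} [Field k] {B : Type*} [Ring B] [Algebra k B]

section Spanning

variable (A : Subalgebra k B) (y₁ y₂ : B)

def RightCommuting (z : B) : Prop :=
  ∀ r : A, ∃ a b c : A, (r : B) * z = y₁ * a + y₂ * b + c

def rightSpan (S : Set (ℕ × ℕ)) : Submodule k B :=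
  span k {w | ∃ p ∈ S, ∃ r : A, w = y₂ ^ p.1 * y₁ ^ p.2 * r}

noncomputable def leftSum : (ℕ × ℕ →₀ A) →ₗ[k] B :=
  Finsupp.lsum k fun p => LinearMap.mulRight k (y₁ ^ p.1 * y₂ ^ p.2) ∘ₗ A.val.toLinearMap

noncomputable def rightSum : (ℕ × ℕ →₀ A) →ₗ[k] B :=
  Finsupp.lsum k fun p => LinearMap.mulLeft k (y₂ ^ p.1 * y₁ ^ p.2) ∘ₗ A.val.toLinearMap

variable {A y₁ y₂} {S T : Set (ℕ × ℕ)} {x : B}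

theorem leftSum_apply (f : ℕ × ℕ →₀ A) :
    leftSum A y₁ y₂ f = f.sum fun p a => (a : B) * (y₁ ^ p.1 * y₂ ^ p.2) := rfl

theorem rightSum_single (p : ℕ × ℕ) (r : A) :
    rightSum A y₁ y₂ (Finsupp.single p r) = y₂ ^ p.1 * y₁ ^ p.2 * r :=
  Finsupp.lsum_single _ _ _ _

theorem monomial_mem_rightSpan {p : ℕ × ℕ} (hp : p ∈ S) (r : A) :
    y₂ ^ p.1 * y₁ ^ p.2 * r ∈ rightSpan A y₁ y₂ S :=
  subset_span ⟨p, hp, r, rfl⟩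

theorem y₁_pow_mul_mem_rightSpan {m : ℕ} (hm : (0, m) ∈ S) (r : A) :
    y₁ ^ m * r ∈ rightSpan A y₁ y₂ S := by
  simpa using monomial_mem_rightSpan (y₁ := y₁) (y₂ := y₂) hm r

theorem y₁_pow_mem_rightSpan {m : ℕ} (hm : (0, m) ∈ S) : y₁ ^ m ∈ rightSpan A y₁ y₂ S := by
  simpa using y₁_pow_mul_mem_rightSpan (y₂ := y₂) hm 1

theorem mem_rightSpan_of_sub_smul_mem {m : ℕ} {c : k} (hm : (0, m) ∈ S)
    (hx : x - c • y₁ ^ m ∈ rightSpan A y₁ y₂ S) : x ∈ rightSpan A y₁ y₂ S := by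
  simpa using add_mem hx (smul_mem _ c (y₁_pow_mem_rightSpan hm))

theorem rightSpan_mono (h : S ⊆ T) : rightSpan A y₁ y₂ S ≤ rightSpan A y₁ y₂ T :=
  span_mono fun _ ⟨p, hp, r, hw⟩ => ⟨p, h hp, r, hw⟩

theorem mul_coe_mem_rightSpan (hx : x ∈ rightSpan A y₁ y₂ S) (s : A) :
    x * s ∈ rightSpan A y₁ y₂ S := by
  suffices rightSpan A y₁ y₂ S ≤ (rightSpan A y₁ y₂ S).comap (LinearMap.mulRight k (s : B)) from
    this hx
  refine span_le.mpr ?_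
  rintro _ ⟨p, hp, r, rfl⟩
  simpa [mul_assoc] using monomial_mem_rightSpan (y₁ := y₁) (y₂ := y₂) hp (r * s)

theorem y₂_pow_mul_mem_rightSpan (hx : x ∈ rightSpan A y₁ y₂ S) (c : ℕ) :
    y₂ ^ c * x ∈ rightSpan A y₁ y₂ {p | c ≤ p.1 ∧ (p.1 - c, p.2) ∈ S} := by
  suffices rightSpan A y₁ y₂ S ≤ (rightSpan A y₁ y₂ {p | c ≤ p.1 ∧ (p.1 - c, p.2) ∈ S}).comap
      (LinearMap.mulLeft k (y₂ ^ c)) from this hx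
  refine span_le.mpr ?_
  rintro _ ⟨p, hp, r, rfl⟩
  have hmem : (c + p.1, p.2) ∈ {p : ℕ × ℕ | c ≤ p.1 ∧ (p.1 - c, p.2) ∈ S} := by simpa using hp
  simpa [pow_add, mul_assoc] using monomial_mem_rightSpan (y₁ := y₁) (y₂ := y₂) hmem r

theorem mul_mem_rightSpan_of_rightCommuting {z : B} (hz : RightCommuting A y₁ y₂ z)
    (hST : ∀ p ∈ S, p ∈ T ∧ (p.1, p.2 + 1) ∈ T ∧ y₂ ^ p.1 * y₁ ^ p.2 * y₂ ∈ rightSpan A y₁ y₂ T)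
    (hx : x ∈ rightSpan A y₁ y₂ S) : x * z ∈ rightSpan A y₁ y₂ T := by
  suffices rightSpan A y₁ y₂ S ≤ (rightSpan A y₁ y₂ T).comap (LinearMap.mulRight k z) from this hx
  refine span_le.mpr ?_
  rintro _ ⟨p, hp, r, rfl⟩
  obtain ⟨hpT, hpT', hy⟩ := hST p hp
  obtain ⟨a, b, c, hr⟩ := hz r
  have hexpand : y₂ ^ p.1 * y₁ ^ p.2 * r * z = y₂ ^ p.1 * y₁ ^ (p.2 + 1) * a
      + y₂ ^ p.1 * y₁ ^ p.2 * y₂ * b + y₂ ^ p.1 * y₁ ^ p.2 * c := by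
    rw [mul_assoc _ (r : B), hr]
    simp only [pow_succ, mul_add, mul_assoc]
  simp only [SetLike.mem_coe, mem_comap, LinearMap.mulRight_apply, hexpand]
  exact add_mem (add_mem (monomial_mem_rightSpan hpT' a) (mul_coe_mem_rightSpan hy b))
    (monomial_mem_rightSpan hpT c)

end Spanning

section Ordering

variable {A : Subalgebra k B} {y₁ y₂ : B} {q q' : k} {t₁ t₂ t₀ : A}

theorem y₁_pow_succ_mul_y₂_sub_smul
    (hL : y₁ * y₂ = q • (y₂ * y₁) - q' • (y₁ * y₁) + y₁ * t₁ + y₂ * t₂ + t₀) (b : ℕ) (c : k) :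
    y₁ ^ (b + 1) * y₂ - (q * c - q') • y₁ ^ (b + 1 + 1) =
      q • ((y₁ ^ b * y₂ - c • y₁ ^ (b + 1)) * y₁) + y₁ ^ (b + 1) * t₁
        + (y₁ ^ b * y₂ - c • y₁ ^ (b + 1)) * t₂ + c • (y₁ ^ (b + 1) * t₂) + y₁ ^ b * t₀ := by
  rw [pow_succ y₁ b, mul_assoc, hL]
  simp only [mul_add, mul_sub, sub_mul, mul_smul_comm, smul_mul_assoc, pow_succ, mul_assoc,
    smul_sub, smul_smul, sub_smul]
  abel

/-- Keeping the coefficient of `y₁^{b+1}` a scalar is what makes the induction close: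
`y₁^{b+1} y₁` needs no reordering, whereas reordering `y₁^{b+1} r y₁` would produce
`y₁^{b+1} y₂` again. -/
theorem exists_y₁_pow_mul_y₂_sub_smul_mem (h₁ : RightCommuting A y₁ y₂ y₁)
    (hL : y₁ * y₂ = q • (y₂ * y₁) - q' • (y₁ * y₁) + y₁ * t₁ + y₂ * t₂ + t₀) (b : ℕ) :
    ∃ c : k, y₁ ^ b * y₂ - c • y₁ ^ (b + 1) ∈
      rightSpan A y₁ y₂ {p | p.1 + p.2 ≤ b + 1 ∧ p.2 ≤ b} := by
  induction b using Nat.strong_induction_on with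
  | _ b ih =>
  cases b with
  | zero => exact ⟨0, by simpa using monomial_mem_rightSpan (p := (1, 0)) (by simp) (1 : A)⟩
  | succ b =>
    have hprev : ∀ c ≤ b, y₁ ^ c * y₂ ∈ rightSpan A y₁ y₂ {p | p.1 + p.2 ≤ c + 1} := by
      intro c hc
      obtain ⟨e, he⟩ := ih c (by omega)
      exact mem_rightSpan_of_sub_smul_mem (by simp) (rightSpan_mono (fun p hp => hp.1) he)
    obtain ⟨c, hc⟩ := ih b (lt_add_one b)
    refine ⟨q * c - q', ?_⟩
    rw [y₁_pow_succ_mul_y₂_sub_smul hL]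
    have huy₁ := mul_mem_rightSpan_of_rightCommuting
      (T := {p | p.1 + p.2 ≤ b + 1 + 1 ∧ p.2 ≤ b + 1}) h₁ (fun p hp => by
        refine ⟨by simp only [Set.mem_ofPred_eq] at hp ⊢; omega,
          by simp only [Set.mem_ofPred_eq] at hp ⊢; omega, ?_⟩
        rw [mul_assoc]
        refine rightSpan_mono (fun p' hp' => ?_) (y₂_pow_mul_mem_rightSpan (hprev p.2 hp.2) p.1)
        simp only [Set.mem_ofPred_eq] at hp hp' ⊢
        omega) hc
    have hut₂ := rightSpan_mono (T := {p | p.1 + p.2 ≤ b + 1 + 1 ∧ p.2 ≤ b + 1})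
      (fun p hp => by simp only [Set.mem_ofPred_eq] at hp ⊢; omega) (mul_coe_mem_rightSpan hc t₂)
    refine add_mem (add_mem (add_mem (add_mem (smul_mem _ q huy₁) ?_) hut₂) ?_) ?_
    · exact y₁_pow_mul_mem_rightSpan (by simp) t₁
    · exact smul_mem _ c (y₁_pow_mul_mem_rightSpan (by simp) t₂)
    · exact y₁_pow_mul_mem_rightSpan (show _ ∧ _ from ⟨by omega, by omega⟩) t₀

theorem y₁_pow_mul_y₂_mem_rightSpan (h₁ : RightCommuting A y₁ y₂ y₁)
    (hL : y₁ * y₂ = q • (y₂ * y₁) - q' • (y₁ * y₁) + y₁ * t₁ + y₂ * t₂ + t₀) (b : ℕ) :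
    y₁ ^ b * y₂ ∈ rightSpan A y₁ y₂ {p | p.1 + p.2 ≤ b + 1} := by
  obtain ⟨c, hc⟩ := exists_y₁_pow_mul_y₂_sub_smul_mem h₁ hL b
  exact mem_rightSpan_of_sub_smul_mem (by simp) (rightSpan_mono (fun p hp => hp.1) hc)

theorem mul_mem_rightSpan_add_one {z x : B} (hz : RightCommuting A y₁ y₂ z)
    (h₁ : RightCommuting A y₁ y₂ y₁)
    (hL : y₁ * y₂ = q • (y₂ * y₁) - q' • (y₁ * y₁) + y₁ * t₁ + y₂ * t₂ + t₀) {n : ℕ}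
    (hx : x ∈ rightSpan A y₁ y₂ {p | p.1 + p.2 ≤ n}) :
    x * z ∈ rightSpan A y₁ y₂ {p | p.1 + p.2 ≤ n + 1} := by
  refine mul_mem_rightSpan_of_rightCommuting hz (fun p hp => ⟨?_, ?_, ?_⟩) hx
  · simp only [Set.mem_ofPred_eq] at hp ⊢; omega
  · simp only [Set.mem_ofPred_eq] at hp ⊢; omega
  · rw [mul_assoc]
    refine rightSpan_mono (fun p' hp' => ?_)
      (y₂_pow_mul_mem_rightSpan (y₁_pow_mul_y₂_mem_rightSpan h₁ hL p.2) p.1)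
    simp only [Set.mem_ofPred_eq] at hp hp' ⊢
    omega

theorem coe_mul_y₁_pow_mul_y₂_pow_mem_rightSpan (h₁ : RightCommuting A y₁ y₂ y₁)
    (h₂ : RightCommuting A y₁ y₂ y₂)
    (hL : y₁ * y₂ = q • (y₂ * y₁) - q' • (y₁ * y₁) + y₁ * t₁ + y₂ * t₂ + t₀) (r : A) (i j : ℕ) :
    (r : B) * (y₁ ^ i * y₂ ^ j) ∈ rightSpan A y₁ y₂ {p | p.1 + p.2 ≤ i + j} := by
  induction j with
  | zero =>
    induction i with
    | zero => simpa using monomial_mem_rightSpan (y₁ := y₁) (y₂ := y₂) (p := (0, 0)) (by simp) r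
    | succ i ih => simpa [pow_succ, mul_assoc] using mul_mem_rightSpan_add_one h₁ h₁ hL ih
  | succ j ih =>
    simpa [pow_succ, mul_assoc, ← add_assoc] using mul_mem_rightSpan_add_one h₂ h₁ hL ih

theorem rightSum_surjective (h₁ : RightCommuting A y₁ y₂ y₁) (h₂ : RightCommuting A y₁ y₂ y₂)
    (hL : y₁ * y₂ = q • (y₂ * y₁) - q' • (y₁ * y₁) + y₁ * t₁ + y₂ * t₂ + t₀)
    (hspan : ∀ x : B, ∃ f : ℕ × ℕ →₀ A, x = f.sum fun p a => (a : B) * (y₁ ^ p.1 * y₂ ^ p.2)) :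
    Function.Surjective (rightSum A y₁ y₂) := by
  have hrange : ∀ S, rightSpan A y₁ y₂ S ≤ LinearMap.range (rightSum A y₁ y₂) := fun S =>
    span_le.mpr <| by
      rintro _ ⟨p, -, r, rfl⟩
      exact ⟨Finsupp.single p r, rightSum_single p r⟩
  intro x
  obtain ⟨f, rfl⟩ := hspan x
  exact sum_mem fun p _ => hrange _ (coe_mul_y₁_pow_mul_y₂_pow_mem_rightSpan h₁ h₂ hL (f p) p.1 p.2)

end Ordering

section Graded

variable {A : Subalgebra k B} (𝒜 : ℕ → Submodule k B) [GradedAlgebra 𝒜]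

/-- The degree of `y₂ ^ p.1 * y₁ ^ p.2` when `yᵢ` has degree `dᵢ`. -/
def monomialDegree (d₁ d₂ : ℕ) (p : ℕ × ℕ) : ℕ := p.1 * d₂ + p.2 * d₁

variable {y₁ y₂ : B} {d₁ d₂ : ℕ}

theorem y₂_pow_mul_y₁_pow_mem (hy₁ : y₁ ∈ 𝒜 d₁) (hy₂ : y₂ ∈ 𝒜 d₂) (p : ℕ × ℕ) :
    y₂ ^ p.1 * y₁ ^ p.2 ∈ 𝒜 (monomialDegree d₁ d₂ p) :=
  SetLike.mul_mem_graded (by simpa using SetLike.pow_mem_graded p.1 hy₂)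
    (by simpa using SetLike.pow_mem_graded p.2 hy₁)

theorem y₁_pow_mul_y₂_pow_mem (hy₁ : y₁ ∈ 𝒜 d₁) (hy₂ : y₂ ∈ 𝒜 d₂) (p : ℕ × ℕ) :
    y₁ ^ p.2 * y₂ ^ p.1 ∈ 𝒜 (monomialDegree d₁ d₂ p) := by
  rw [monomialDegree, add_comm]
  exact SetLike.mul_mem_graded (by simpa using SetLike.pow_mem_graded p.2 hy₁)
    (by simpa using SetLike.pow_mem_graded p.1 hy₂)

variable (d₁ d₂) in
def coeffSubspace (n : ℕ) (p : ℕ × ℕ) : Submodule k B :=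
  if monomialDegree d₁ d₂ p ≤ n then 𝒜 (n - monomialDegree d₁ d₂ p) else ⊥

theorem mul_mem_of_mem_coeffSubspace {n : ℕ} {p : ℕ × ℕ} {m a : B}
    (hm : m ∈ 𝒜 (monomialDegree d₁ d₂ p)) (ha : a ∈ coeffSubspace 𝒜 d₁ d₂ n p) :
    m * a ∈ 𝒜 n ∧ a * m ∈ 𝒜 n := by
  unfold coeffSubspace at ha
  split_ifs at ha with hle
  · exact ⟨by simpa [hle] using SetLike.mul_mem_graded hm ha,
      by simpa [hle] using SetLike.mul_mem_graded ha hm⟩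
  · simp [(mem_bot k).mp ha]

variable (A d₁ d₂) in
def homogCoeffs (n : ℕ) : Submodule k (ℕ × ℕ →₀ A) where
  carrier := {f | ∀ p, (f p : B) ∈ coeffSubspace 𝒜 d₁ d₂ n p}
  add_mem' hf hg p := by simpa using add_mem (hf p) (hg p)
  zero_mem' p := by simp
  smul_mem' c f hf p := by simpa using smul_mem _ c (hf p)

theorem rightSum_mem_of_mem_homogCoeffs (hy₁ : y₁ ∈ 𝒜 d₁) (hy₂ : y₂ ∈ 𝒜 d₂) {n : ℕ}
    {f : ℕ × ℕ →₀ A} (hf : f ∈ homogCoeffs A 𝒜 d₁ d₂ n) : rightSum A y₁ y₂ f ∈ 𝒜 n :=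
  sum_mem fun p _ => (mul_mem_of_mem_coeffSubspace 𝒜 (y₂_pow_mul_y₁_pow_mem 𝒜 hy₁ hy₂ p) (hf p)).1

theorem leftSum_mapDomain_swap_mem_of_mem_homogCoeffs (hy₁ : y₁ ∈ 𝒜 d₁) (hy₂ : y₂ ∈ 𝒜 d₂)
    {n : ℕ} {f : ℕ × ℕ →₀ A} (hf : f ∈ homogCoeffs A 𝒜 d₁ d₂ n) :
    leftSum A y₁ y₂ (f.mapDomain Prod.swap) ∈ 𝒜 n := by
  rw [leftSum_apply, Finsupp.sum_mapDomain_index (by simp) (by simp [add_mul])]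
  exact sum_mem fun p _ =>
    (mul_mem_of_mem_coeffSubspace 𝒜 (y₁_pow_mul_y₂_pow_mem 𝒜 hy₁ hy₂ p) (hf p)).2

section HomogeneousParts

variable (hA : ∀ a ∈ A, ∀ n, (decompose 𝒜 a n : B) ∈ A)

def gradedProj (m : ℕ) : A →ₗ[k] A where
  toFun a := ⟨decompose 𝒜 (a : B) m, hA _ a.2 m⟩
  map_add' a b := by ext; simp
  map_smul' c a := by ext; simp [DirectSum.smul_apply]

variable (d₁ d₂) in
/-- The part of a right expansion `∑ y₂^{p.1} y₁^{p.2} f p` that lands in degree `n`. -/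
noncomputable def homogPart (n : ℕ) : (ℕ × ℕ →₀ A) →ₗ[k] (ℕ × ℕ →₀ A) :=
  Finsupp.lsum k fun p => if monomialDegree d₁ d₂ p ≤ n then
    Finsupp.lsingle p ∘ₗ gradedProj 𝒜 hA (n - monomialDegree d₁ d₂ p) else 0

theorem homogPart_single (n : ℕ) (q : ℕ × ℕ) (a : A) :
    homogPart 𝒜 d₁ d₂ hA n (Finsupp.single q a) = if monomialDegree d₁ d₂ q ≤ n then
      Finsupp.single q (gradedProj 𝒜 hA (n - monomialDegree d₁ d₂ q) a) else 0 := by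
  rw [homogPart, Finsupp.lsum_single]
  split_ifs <;> rfl

theorem homogPart_mem_homogCoeffs (n : ℕ) (f : ℕ × ℕ →₀ A) :
    homogPart 𝒜 d₁ d₂ hA n f ∈ homogCoeffs A 𝒜 d₁ d₂ n := by
  induction f using Finsupp.induction_linear with
  | zero => simp only [map_zero, zero_mem]
  | add f g hf hg => simpa using add_mem hf hg
  | single q a =>
    rw [homogPart_single]
    split_ifs with hq
    · intro p
      rcases eq_or_ne q p with rfl | hqp
      · simp [coeffSubspace, hq, gradedProj]
      · simp [Finsupp.single_eq_of_ne' hqp]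
    · exact zero_mem _

theorem coe_homogPart_add_apply (m : ℕ) (f : ℕ × ℕ →₀ A) (p : ℕ × ℕ) :
    (homogPart 𝒜 d₁ d₂ hA (m + monomialDegree d₁ d₂ p) f p : B) = decompose 𝒜 (f p : B) m := by
  induction f using Finsupp.induction_linear with
  | zero => simp
  | add f g hf hg => simp [hf, hg]
  | single q a =>
    rw [homogPart_single]
    rcases eq_or_ne q p with rfl | hqp
    · simp only [le_add_self, if_pos, Finsupp.single_eq_same, gradedProj, LinearMap.coe_mk,
        AddHom.coe_mk]
      rw [Nat.add_sub_cancel]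
    · split_ifs <;> simp [Finsupp.single_eq_of_ne' hqp]

theorem rightSum_homogPart (hy₁ : y₁ ∈ 𝒜 d₁) (hy₂ : y₂ ∈ 𝒜 d₂) (n : ℕ) (f : ℕ × ℕ →₀ A) :
    rightSum A y₁ y₂ (homogPart 𝒜 d₁ d₂ hA n f) = decompose 𝒜 (rightSum A y₁ y₂ f) n := by
  suffices rightSum A y₁ y₂ ∘ₗ homogPart 𝒜 d₁ d₂ hA n =
      GradedAlgebra.proj 𝒜 n ∘ₗ rightSum A y₁ y₂ from LinearMap.congr_fun this f
  refine Finsupp.lhom_ext fun q a => ?_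
  have hq := y₂_pow_mul_y₁_pow_mem 𝒜 hy₁ hy₂ q
  simp only [LinearMap.comp_apply, homogPart_single, GradedAlgebra.proj_apply, rightSum_single]
  split_ifs with hle
  · rw [rightSum_single, coe_decompose_mul_of_left_mem_of_le 𝒜 hq hle]
    rfl
  · rw [map_zero, coe_decompose_mul_of_left_mem_of_not_le 𝒜 hq hle]

end HomogeneousParts

theorem eq_zero_of_mem_homogCoeffs_of_rightSum_eq_zero [∀ n, FiniteDimensional k (𝒜 n)]
    (hA : ∀ a ∈ A, ∀ n, (decompose 𝒜 a n : B) ∈ A) (hy₁ : y₁ ∈ 𝒜 d₁) (hy₂ : y₂ ∈ 𝒜 d₂)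
    (hleft : Function.Injective (leftSum A y₁ y₂))
    (hright : Function.Surjective (rightSum A y₁ y₂)) {n : ℕ} {f : ℕ × ℕ →₀ A}
    (hf : f ∈ homogCoeffs A 𝒜 d₁ d₂ n) (h0 : rightSum A y₁ y₂ f = 0) : f = 0 := by
  let V := homogCoeffs A 𝒜 d₁ d₂ n
  let L : V →ₗ[k] 𝒜 n :=
    (leftSum A y₁ y₂ ∘ₗ Finsupp.lmapDomain A k Prod.swap ∘ₗ V.subtype).codRestrict _
      fun g => leftSum_mapDomain_swap_mem_of_mem_homogCoeffs 𝒜 hy₁ hy₂ g.2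
  let R : V →ₗ[k] 𝒜 n := (rightSum A y₁ y₂ ∘ₗ V.subtype).codRestrict _
    fun g => rightSum_mem_of_mem_homogCoeffs 𝒜 hy₁ hy₂ g.2
  have hL : Function.Injective L := fun g g' h => Subtype.ext <|
    Finsupp.mapDomain_injective Prod.swap_injective (hleft (congrArg Subtype.val h))
  have hR : Function.Surjective R := by
    rintro ⟨x, hx⟩
    obtain ⟨g, rfl⟩ := hright x
    exact ⟨⟨_, homogPart_mem_homogCoeffs 𝒜 hA n g⟩,
      Subtype.ext ((rightSum_homogPart 𝒜 hA hy₁ hy₂ n g).trans (decompose_of_mem_same 𝒜 hx))⟩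
  have hRinj : Function.Injective R := LinearMap.injective_of_injective_of_surjective (V := V) hL hR
  have hRf : R ⟨f, hf⟩ = R 0 := Subtype.ext (by simpa [R] using h0)
  simpa using congrArg Subtype.val (hRinj hRf)

theorem rightSum_injective_of_graded [∀ n, FiniteDimensional k (𝒜 n)]
    (hA : ∀ a ∈ A, ∀ n, (decompose 𝒜 a n : B) ∈ A)
    (hy₁ : y₁ ∈ 𝒜 d₁) (hy₂ : y₂ ∈ 𝒜 d₂) (hleft : Function.Injective (leftSum A y₁ y₂))
    (hright : Function.Surjective (rightSum A y₁ y₂)) :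
    Function.Injective (rightSum A y₁ y₂) := by
  refine (injective_iff_map_eq_zero _).mpr fun f hf => ?_
  have hpart : ∀ n, homogPart 𝒜 d₁ d₂ hA n f = 0 := fun n =>
    eq_zero_of_mem_homogCoeffs_of_rightSum_eq_zero 𝒜 hA hy₁ hy₂ hleft hright
      (homogPart_mem_homogCoeffs 𝒜 hA n f) (by simp [rightSum_homogPart 𝒜 hA hy₁ hy₂, hf])
  ext p : 1
  have hcomp : ∀ m, (decompose 𝒜 (f p : B) m : B) = 0 := fun m => by
    rw [← coe_homogPart_add_apply 𝒜 hA m f p, hpart]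
    rfl
  exact Subtype.ext ((decompose 𝒜).injective
    (DFinsupp.ext fun m => Subtype.ext (by simpa using hcomp m)))

end Graded

end DoubleExtension

namespace RightDoubleExtension

open DoubleExtension

variable {k : Type*} [Field k] {B : Type*} [Ring B] [Algebra k B] {A : Subalgebra k B}
  (E : RightDoubleExtension k A)

theorem y₁_mul_add_y₂_mul (u v : A) :
    E.y₁ * u + E.y₂ * v = ((E.σ₁₁ u + E.σ₂₁ v : A) : B) * E.y₁
      + ((E.σ₁₂ u + E.σ₂₂ v : A) : B) * E.y₂ + ((E.δ₁ u + E.δ₂ v : A) : B) := by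
  rw [E.R2₁, E.R2₂]
  push_cast
  noncomm_ring

theorem leftSum_injective : Function.Injective (leftSum A E.y₁ E.y₂) := fun f _ h =>
  (E.basis (leftSum A E.y₁ E.y₂ f)).unique rfl h

theorem exists_eq_leftSum (x : B) :
    ∃ f : ℕ × ℕ →₀ A, x = f.sum fun p a => (a : B) * (E.y₁ ^ p.1 * E.y₂ ^ p.2) :=
  (E.basis x).exists

theorem leftLinear_eq_rightLinear (h₁ : RightCommuting A E.y₁ E.y₂ E.y₁)
    (h₂ : RightCommuting A E.y₁ E.y₂ E.y₂) :
    {w : B | ∃ a b c : A, w = (a : B) * E.y₁ + (b : B) * E.y₂ + (c : B)} =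
      {w : B | ∃ a b c : A, w = E.y₁ * (a : B) + E.y₂ * (b : B) + (c : B)} := by
  ext w
  constructor
  · rintro ⟨a, b, c, rfl⟩
    obtain ⟨a₁, b₁, c₁, ha⟩ := h₁ a
    obtain ⟨a₂, b₂, c₂, hb⟩ := h₂ b
    exact ⟨a₁ + a₂, b₁ + b₂, c₁ + c₂ + c, by rw [ha, hb]; push_cast; noncomm_ring⟩
  · rintro ⟨a, b, c, rfl⟩
    exact ⟨E.σ₁₁ a + E.σ₂₁ b, E.σ₁₂ a + E.σ₂₂ b, E.δ₁ a + E.δ₂ b + c, by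
      rw [E.y₁_mul_add_y₂_mul]; push_cast; abel⟩

theorem exists_y₁_mul_y₂_eq (hp : E.p₁₂ ≠ 0) (h₁ : RightCommuting A E.y₁ E.y₂ E.y₁)
    (h₂ : RightCommuting A E.y₁ E.y₂ E.y₂) :
    ∃ τ'₁ τ'₂ τ'₀ : A,
      E.y₁ * E.y₂ = E.p₁₂⁻¹ • (E.y₂ * E.y₁) - (E.p₁₂⁻¹ * E.p₁₁) • (E.y₁ * E.y₁)
        + E.y₁ * (τ'₁ : B) + E.y₂ * (τ'₂ : B) + (τ'₀ : B) := by
  obtain ⟨a₁, b₁, c₁, hτ₁⟩ := h₁ E.τ₁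
  obtain ⟨a₂, b₂, c₂, hτ₂⟩ := h₂ E.τ₂
  refine ⟨-E.p₁₂⁻¹ • (a₁ + a₂), -E.p₁₂⁻¹ • (b₁ + b₂), -E.p₁₂⁻¹ • (c₁ + c₂ + E.τ₀), ?_⟩
  have hR1 : E.p₁₂ • (E.y₁ * E.y₂) = E.y₂ * E.y₁ - E.p₁₁ • (E.y₁ * E.y₁)
      - (E.y₁ * a₁ + E.y₂ * b₁ + c₁) - (E.y₁ * a₂ + E.y₂ * b₂ + c₂) - E.τ₀ := by
    rw [E.R1, hτ₁, hτ₂]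
    abel
  rw [← inv_smul_smul₀ hp (E.y₁ * E.y₂), hR1]
  push_cast
  simp only [mul_smul_comm, mul_add]
  module

end RightDoubleExtension

namespace SigmaInvertible

open DoubleExtension

variable {k : Type*} [Field k] {B : Type*} [Ring B] [Algebra k B] {A : Subalgebra k B}
  {E : RightDoubleExtension k A}

theorem rightCommuting_y₁ (hσ : SigmaInvertible E) : RightCommuting A E.y₁ E.y₂ E.y₁ := by
  obtain ⟨φ₁₁, _, φ₂₁, _, -, -, -, hφ⟩ := hσ
  intro r
  refine ⟨φ₁₁ r, φ₂₁ r, -(E.δ₁ (φ₁₁ r) + E.δ₂ (φ₂₁ r)), ?_⟩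
  rw [E.y₁_mul_add_y₂_mul, (hφ r).1, (hφ r).2.1]
  push_cast
  noncomm_ring

theorem rightCommuting_y₂ (hσ : SigmaInvertible E) : RightCommuting A E.y₁ E.y₂ E.y₂ := by
  obtain ⟨_, φ₁₂, _, φ₂₂, -, -, -, hφ⟩ := hσ
  intro r
  refine ⟨φ₁₂ r, φ₂₂ r, -(E.δ₁ (φ₁₂ r) + E.δ₂ (φ₂₂ r)), ?_⟩
  rw [E.y₁_mul_add_y₂_mul, (hφ r).2.2.1, (hφ r).2.2.2]
  push_cast
  noncomm_ring

end SigmaInvertible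

theorem double_of_graded_invertible_general
    {k : Type*} [Field k] {B : Type*} [Ring B] [Algebra k B]
    {A : Subalgebra k B} (E : RightDoubleExtension k A)
    (𝒜 : ℕ → Submodule k B) [GradedAlgebra 𝒜]
    (hfin : ∀ n, FiniteDimensional k (𝒜 n))
    (hAgr : ∀ a : B, a ∈ A → ∀ n, ((DirectSum.decompose 𝒜 a n : 𝒜 n) : B) ∈ A)
    (hy₁ : ∃ d, 0 < d ∧ E.y₁ ∈ 𝒜 d) (hy₂ : ∃ d, 0 < d ∧ E.y₂ ∈ 𝒜 d)
    (hp : E.p₁₂ ≠ 0) (hσ : SigmaInvertible E) :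
    ({w : B | ∃ a b c : A, w = (a : B) * E.y₁ + (b : B) * E.y₂ + (c : B)} =
      {w : B | ∃ a b c : A, w = E.y₁ * (a : B) + E.y₂ * (b : B) + (c : B)}) ∧
    (∃ τ'₁ τ'₂ τ'₀ : A,
      E.y₁ * E.y₂ = E.p₁₂⁻¹ • (E.y₂ * E.y₁) - (E.p₁₂⁻¹ * E.p₁₁) • (E.y₁ * E.y₁)
        + E.y₁ * (τ'₁ : B) + E.y₂ * (τ'₂ : B) + (τ'₀ : B)) ∧
    (∀ b : B, ∃! f : ℕ × ℕ →₀ A,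
      b = f.sum fun n a => (E.y₂ ^ n.1 * E.y₁ ^ n.2) * (a : B)) := by
  obtain ⟨d₁, -, hy₁⟩ := hy₁
  obtain ⟨d₂, -, hy₂⟩ := hy₂
  have h₁ := hσ.rightCommuting_y₁
  have h₂ := hσ.rightCommuting_y₂
  obtain ⟨τ'₁, τ'₂, τ'₀, hL⟩ := E.exists_y₁_mul_y₂_eq hp h₁ h₂
  have hsurj := DoubleExtension.rightSum_surjective h₁ h₂ hL E.exists_eq_leftSum
  have hinj := DoubleExtension.rightSum_injective_of_graded 𝒜 hAgr hy₁ hy₂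
    E.leftSum_injective hsurj
  refine ⟨E.leftLinear_eq_rightLinear h₁ h₂, ⟨τ'₁, τ'₂, τ'₀, hL⟩, fun b => ?_⟩
  obtain ⟨f, rfl⟩ := hsurj b
  exact ⟨f, rfl, fun g hg => hinj hg.symm⟩

/-- A connected graded right double extension with `p₁₂ ≠ 0` and `σ` invertible is a
double extension: `Ay₁+Ay₂+A = y₁A+y₂A+A`, the left relation (L1) holds, and the
monomials `y₂^{n₁}y₁^{n₂}` form a basis of `B` as a right `A`-module. -/
theorem double_of_graded_invertible
    {k : Type*} [Field k] {B : Type*} [Ring B] [Algebra k B]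
    {A : Subalgebra k B} (E : RightDoubleExtension k A)
    (𝒜 : ℕ → Submodule k B) [GradedAlgebra 𝒜]
    (hconn : 𝒜 0 = 1)
    (hfin : ∀ n, FiniteDimensional k (𝒜 n))
    (hAgr : ∀ a : B, a ∈ A → ∀ n, ((DirectSum.decompose 𝒜 a n : 𝒜 n) : B) ∈ A)
    (hy₁ : ∃ d, 0 < d ∧ E.y₁ ∈ 𝒜 d) (hy₂ : ∃ d, 0 < d ∧ E.y₂ ∈ 𝒜 d)
    (hp : E.p₁₂ ≠ 0) (hσ : SigmaInvertible E) :
    ({w : B | ∃ a b c : A, w = (a : B) * E.y₁ + (b : B) * E.y₂ + (c : B)} =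
      {w : B | ∃ a b c : A, w = E.y₁ * (a : B) + E.y₂ * (b : B) + (c : B)}) ∧
    (∃ τ'₁ τ'₂ τ'₀ : A,
      E.y₁ * E.y₂ = E.p₁₂⁻¹ • (E.y₂ * E.y₁) - (E.p₁₂⁻¹ * E.p₁₁) • (E.y₁ * E.y₁)
        + E.y₁ * (τ'₁ : B) + E.y₂ * (τ'₂ : B) + (τ'₀ : B)) ∧
    (∀ b : B, ∃! f : ℕ × ℕ →₀ A,
      b = f.sum fun n a => (E.y₂ ^ n.1 * E.y₁ ^ n.2) * (a : B)) :=
  double_of_graded_invertible_general E 𝒜 hfin hAgr hy₁ hy₂ hp hσ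
end

section
/- Let B be a right double extension of A with data (P, σ, δ, τ), and suppose there is a k-algebra homomorphism ε : A → k with kernel m such that σᵢⱼ(m) ⊆ m for all i, j ∈ {1,2}, δᵢ(m) ⊆ m for i = 1, 2, and τ₁, τ₂, τ₀ ∈ m (this holds for instance when B is connected graded with y₁, y₂ of positive degree and m = A_{≥1}). Let I be the two-sided ideal of B generated by m. Then there is a k-algebra isomorphism B/I ≅ k⟨Y₁, Y₂⟩/(Y₂Y₁ − p₁₂·Y₁Y₂ − p₁₁·Y₁²) sending the images of y₁ and y₂ to Y₁ and Y₂ respectively (the right-hand side is the quotient of the free algebra on Y₁, Y₂ by the two-sided ideal generated by Y₂Y₁ − p₁₂Y₁Y₂ − p₁₁Y₁²). -/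
/-- The paper's `Y₁, Y₂` are `ι 0, ι 1`. -/
def quadraticPlaneRel (k : Type*) [CommRing k] (p₁₂ p₁₁ : k) (a b : FreeAlgebra k (Fin 2)) :
    Prop :=
  a = FreeAlgebra.ι k 1 * FreeAlgebra.ι k 0 ∧
    b = p₁₂ • (FreeAlgebra.ι k 0 * FreeAlgebra.ι k 1)
      + p₁₁ • (FreeAlgebra.ι k 0 * FreeAlgebra.ι k 0)

abbrev QuadraticPlane (k : Type*) [CommRing k] (p₁₂ p₁₁ : k) :=
  RingQuot (quadraticPlaneRel k p₁₂ p₁₁)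

namespace QuadraticPlane

variable {k : Type*} [CommRing k] {p₁₂ p₁₁ : k}

noncomputable def Y (i : Fin 2) : QuadraticPlane k p₁₂ p₁₁ :=
  RingQuot.mkAlgHom k _ (FreeAlgebra.ι k i)

theorem Y_one_mul_Y_zero :
    (Y 1 * Y 0 : QuadraticPlane k p₁₂ p₁₁) =
      p₁₂ • (Y 0 * Y 1) + p₁₁ • (Y 0 * Y 0) := by
  simpa only [Y, map_mul, map_add, map_smul] using
    RingQuot.mkAlgHom_rel k (s := quadraticPlaneRel k p₁₂ p₁₁) ⟨rfl, rfl⟩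

theorem adjoin_range_Y :
    Algebra.adjoin k (Set.range (Y : Fin 2 → QuadraticPlane k p₁₂ p₁₁)) = ⊤ := by
  rw [show Set.range Y = RingQuot.mkAlgHom k _ '' Set.range (FreeAlgebra.ι k) from
    Set.range_comp _ _, ← AlgHom.map_adjoin, FreeAlgebra.adjoin_range_ι, Algebra.map_top,
    AlgHom.range_eq_top]
  exact RingQuot.mkAlgHom_surjective k _

variable {C : Type*} [Ring C] [Algebra k C]

noncomputable def lift (u v : C) (h : v * u = p₁₂ • (u * v) + p₁₁ • (u * u)) :
    QuadraticPlane k p₁₂ p₁₁ →ₐ[k] C :=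
  RingQuot.liftAlgHom k ⟨FreeAlgebra.lift k ![u, v], by
    rintro _ _ ⟨rfl, rfl⟩
    simpa only [map_mul, map_add, map_smul, FreeAlgebra.lift_ι_apply, Matrix.cons_val_zero,
      Matrix.cons_val_one] using h⟩

@[simp] theorem lift_Y (u v : C) (h : v * u = p₁₂ • (u * v) + p₁₁ • (u * u)) (i : Fin 2) :
    lift u v h (Y i) = ![u, v] i := by
  rw [lift, Y, RingQuot.liftAlgHom_mkAlgHom_apply, FreeAlgebra.lift_ι_apply]

end QuadraticPlane

namespace AlgHom

variable {k : Type*} [CommRing k]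

theorem apply_map_eq_mul_of_mapsTo_ker {R : Type*} [Ring R] [Algebra k R] (ε : R →ₐ[k] k)
    (σ : R →ₗ[k] R) (hσ : ∀ a ∈ RingHom.ker ε, σ a ∈ RingHom.ker ε) (a : R) :
    ε (σ a) = ε a * ε (σ 1) := by
  have hσa := hσ (a - ε a • 1) (by simp [RingHom.mem_ker])
  rwa [RingHom.mem_ker, map_sub, map_smul, map_sub, map_smul, smul_eq_mul, sub_eq_zero] at hσa

variable {B : Type*} [Ring B] [Algebra k B] {A : Subalgebra k B} (ε : A →ₐ[k] k)

def extendedKer : TwoSidedIdeal B :=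
  TwoSidedIdeal.span ((fun a : A => (a : B)) '' (RingHom.ker ε : Set A))

theorem coe_coe_extendedKer (a : A) :
    ((a : B) : ε.extendedKer.ringCon.Quotient) = algebraMap k _ (ε a) := by
  rw [← RingCon.coe_algebraMap, RingCon.eq, TwoSidedIdeal.rel_iff]
  refine TwoSidedIdeal.subset_span ⟨a - algebraMap k A (ε a), by simp [RingHom.mem_ker], ?_⟩
  simp

end AlgHom

namespace RightDoubleExtension

open QuadraticPlane

variable {k : Type*} [Field k] {B : Type*} [Ring B] [Algebra k B] {A : Subalgebra k B}
  (E : RightDoubleExtension k A)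

def mono (n : ℕ × ℕ) : B := E.y₁ ^ n.1 * E.y₂ ^ n.2

noncomputable def monomialBasis : Module.Basis (ℕ × ℕ) A B :=
  .ofRepr (LinearEquiv.ofBijective (Finsupp.linearCombination A E.mono)
    (Function.bijective_iff_existsUnique _ |>.mpr fun b => by
      simp only [Finsupp.linearCombination_apply, eq_comm (b := b)]
      exact E.basis b)).symm

@[simp] theorem monomialBasis_apply (n : ℕ × ℕ) : E.monomialBasis n = E.mono n := by
  simp [monomialBasis]

theorem repr_coe_mul_mono (a : A) (n : ℕ × ℕ) :
    E.monomialBasis.repr ((a : B) * E.mono n) = Finsupp.single n a := by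
  rw [← smul_eq_mul, ← Subalgebra.smul_def, ← E.monomialBasis_apply, map_smul,
    Module.Basis.repr_self, Finsupp.smul_single, smul_eq_mul, mul_one]

@[elab_as_elim]
theorem induction_on {P : B → Prop} (b : B) (mono : ∀ n, P (E.mono n)) (zero : P 0)
    (add : ∀ x y, P x → P y → P (x + y)) (mul_left : ∀ (a : A) x, P x → P ((a : B) * x)) :
    P b := by
  induction E.monomialBasis.mem_span b using Submodule.span_induction with
  | mem x hx => obtain ⟨n, rfl⟩ := hx; simpa using mono n
  | zero => exact zero
  | add x y _ _ hx hy => exact add x y hx hy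
  | smul a x _ hx => exact mul_left a x hx

theorem adjoin_eq_top : Algebra.adjoin k ((A : Set B) ∪ {E.y₁, E.y₂}) = ⊤ := by
  refine eq_top_iff.mpr fun b _ => E.induction_on b (fun n => ?_) (Subalgebra.zero_mem _)
    (fun _ _ => Subalgebra.add_mem _) fun a _ => Subalgebra.mul_mem _ ?_
  · exact Subalgebra.mul_mem _ (Subalgebra.pow_mem _ (Algebra.subset_adjoin (by simp)) _)
      (Subalgebra.pow_mem _ (Algebra.subset_adjoin (by simp)) _)
  · exact Algebra.subset_adjoin (Or.inl a.2)

theorem eq_of_linear_eq {a b c a' b' c' : A}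
    (h : (a : B) * E.y₁ + b * E.y₂ + c = a' * E.y₁ + b' * E.y₂ + c') :
    a = a' ∧ b = b' ∧ c = c' := by
  have hrepr (a b c : A) : E.monomialBasis.repr ((a : B) * E.y₁ + b * E.y₂ + c) =
      Finsupp.single (1, 0) a + Finsupp.single (0, 1) b + Finsupp.single (0, 0) c := by
    rw [← E.repr_coe_mul_mono, ← E.repr_coe_mul_mono, ← E.repr_coe_mul_mono, ← map_add,
      ← map_add]
    simp [mono]
  have := congrArg E.monomialBasis.repr h
  rw [hrepr, hrepr] at this
  exact ⟨by simpa using DFunLike.congr_fun this (1, 0), by simpa using DFunLike.congr_fun this (0, 1),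
    by simpa using DFunLike.congr_fun this (0, 0)⟩

theorem R2₁_one : E.σ₁₁ 1 = 1 ∧ E.σ₁₂ 1 = 0 ∧ E.δ₁ 1 = 0 :=
  E.eq_of_linear_eq <| by simpa using (E.R2₁ 1).symm

theorem R2₂_one : E.σ₂₁ 1 = 0 ∧ E.σ₂₂ 1 = 1 ∧ E.δ₂ 1 = 0 :=
  E.eq_of_linear_eq <| by simpa using (E.R2₂ 1).symm

theorem y₁_mul_mono (n : ℕ × ℕ) : E.y₁ * E.mono n = E.mono (n.1 + 1, n.2) := by
  rw [mono, mono, ← mul_assoc, ← pow_succ']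

theorem y₂_mul_mono_zero (j : ℕ) : E.y₂ * E.mono (0, j) = E.mono (0, j + 1) := by
  rw [mono, mono, pow_zero, one_mul, one_mul, pow_succ']

section augmentation

variable (ε : A →ₐ[k] k)

noncomputable def toPlaneₗ : B →ₗ[k] QuadraticPlane k E.p₁₂ E.p₁₁ :=
  Finsupp.linearCombination k (fun n => Y 0 ^ n.1 * Y 1 ^ n.2) ∘ₗ
    Finsupp.mapRange.linearMap ε.toLinearMap ∘ₗ
      E.monomialBasis.repr.toLinearMap.restrictScalars k

theorem toPlaneₗ_coe_mul (a : A) (b : B) :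
    E.toPlaneₗ ε ((a : B) * b) = ε a • E.toPlaneₗ ε b := by
  rw [← smul_eq_mul, ← Subalgebra.smul_def]
  simp only [toPlaneₗ, LinearMap.coe_comp, Function.comp_apply, LinearMap.restrictScalars_apply,
    LinearEquiv.coe_coe, map_smul, Finsupp.mapRange.linearMap_apply]
  rw [Finsupp.mapRange_smul' a (ε a) _ (fun x => by simp [smul_eq_mul]), map_smul]

theorem toPlaneₗ_mono (n : ℕ × ℕ) : E.toPlaneₗ ε (E.mono n) = Y 0 ^ n.1 * Y 1 ^ n.2 := by
  rw [← E.monomialBasis_apply, toPlaneₗ, LinearMap.comp_apply, LinearMap.comp_apply,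
    LinearMap.restrictScalars_apply, LinearEquiv.coe_coe, Module.Basis.repr_self,
    Finsupp.mapRange.linearMap_apply, Finsupp.mapRange_single, AlgHom.toLinearMap_apply,
    map_one, Finsupp.linearCombination_single, one_smul]

theorem toPlaneₗ_one : E.toPlaneₗ ε 1 = 1 := by
  simpa [mono] using E.toPlaneₗ_mono ε (0, 0)

theorem toPlaneₗ_coe (a : A) : E.toPlaneₗ ε a = algebraMap k _ (ε a) := by
  simpa [Algebra.algebraMap_eq_smul_one, toPlaneₗ_one] using E.toPlaneₗ_coe_mul ε a 1

theorem toPlaneₗ_y₁ : E.toPlaneₗ ε E.y₁ = Y 0 := by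
  simpa [mono] using E.toPlaneₗ_mono ε (1, 0)

theorem toPlaneₗ_y₂ : E.toPlaneₗ ε E.y₂ = Y 1 := by
  simpa [mono] using E.toPlaneₗ_mono ε (0, 1)

theorem toPlaneₗ_linear_mul (a b c : A) (x : B) :
    E.toPlaneₗ ε (((a : B) * E.y₁ + b * E.y₂ + c) * x) =
      ε a • E.toPlaneₗ ε (E.y₁ * x) + ε b • E.toPlaneₗ ε (E.y₂ * x) + ε c • E.toPlaneₗ ε x := by
  simp only [add_mul, mul_assoc, map_add, toPlaneₗ_coe_mul]

end augmentation

section compatible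

variable {ε : A →ₐ[k] k}
  (hσ : ∀ a ∈ RingHom.ker ε, E.σ₁₁ a ∈ RingHom.ker ε ∧ E.σ₁₂ a ∈ RingHom.ker ε ∧
    E.σ₂₁ a ∈ RingHom.ker ε ∧ E.σ₂₂ a ∈ RingHom.ker ε)
  (hδ : ∀ a ∈ RingHom.ker ε, E.δ₁ a ∈ RingHom.ker ε ∧ E.δ₂ a ∈ RingHom.ker ε)
  (hτ : E.τ₁ ∈ RingHom.ker ε ∧ E.τ₂ ∈ RingHom.ker ε ∧ E.τ₀ ∈ RingHom.ker ε)

include hσ hδ in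
theorem apply_R2₁_coeffs (a : A) :
    ε (E.σ₁₁ a) = ε a ∧ ε (E.σ₁₂ a) = 0 ∧ ε (E.δ₁ a) = 0 := by
  obtain ⟨h₁₁, h₁₂, hd⟩ := E.R2₁_one
  refine ⟨?_, ?_, ?_⟩
  · rw [ε.apply_map_eq_mul_of_mapsTo_ker _ (fun a ha => (hσ a ha).1), h₁₁, map_one, mul_one]
  · rw [ε.apply_map_eq_mul_of_mapsTo_ker _ (fun a ha => (hσ a ha).2.1), h₁₂, map_zero, mul_zero]
  · rw [ε.apply_map_eq_mul_of_mapsTo_ker _ (fun a ha => (hδ a ha).1), hd, map_zero, mul_zero]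

include hσ hδ in
theorem apply_R2₂_coeffs (a : A) :
    ε (E.σ₂₁ a) = 0 ∧ ε (E.σ₂₂ a) = ε a ∧ ε (E.δ₂ a) = 0 := by
  obtain ⟨h₂₁, h₂₂, hd⟩ := E.R2₂_one
  refine ⟨?_, ?_, ?_⟩
  · rw [ε.apply_map_eq_mul_of_mapsTo_ker _ (fun a ha => (hσ a ha).2.2.1), h₂₁, map_zero, mul_zero]
  · rw [ε.apply_map_eq_mul_of_mapsTo_ker _ (fun a ha => (hσ a ha).2.2.2), h₂₂, map_one, mul_one]
  · rw [ε.apply_map_eq_mul_of_mapsTo_ker _ (fun a ha => (hδ a ha).2), hd, map_zero, mul_zero]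

include hσ hδ in
theorem toPlaneₗ_y₁_mul (b : B) : E.toPlaneₗ ε (E.y₁ * b) = Y 0 * E.toPlaneₗ ε b := by
  induction b using E.induction_on with
  | mono n => rw [y₁_mul_mono, toPlaneₗ_mono, toPlaneₗ_mono, pow_succ', mul_assoc]
  | zero => simp
  | add x y hx hy => rw [mul_add, map_add, map_add, hx, hy, mul_add]
  | mul_left a x hx =>
    obtain ⟨h₁₁, h₁₂, hd⟩ := E.apply_R2₁_coeffs hσ hδ a
    rw [← mul_assoc, E.R2₁, toPlaneₗ_linear_mul, h₁₁, h₁₂, hd, hx, toPlaneₗ_coe_mul,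
      mul_smul_comm]
    simp

include hσ hδ hτ in
theorem toPlaneₗ_y₂_mul_mono (n : ℕ × ℕ) :
    E.toPlaneₗ ε (E.y₂ * E.mono n) = Y 1 * (Y 0 ^ n.1 * Y 1 ^ n.2) := by
  obtain ⟨i, j⟩ := n
  induction i with
  | zero =>
    rw [y₂_mul_mono_zero, toPlaneₗ_mono, pow_zero, one_mul, one_mul, pow_succ']
  | succ i ih =>
    have hR1 : E.y₂ * E.mono (i + 1, j) = (E.p₁₂ • (E.y₁ * E.y₂) + E.p₁₁ • (E.y₁ * E.y₁)
        + ((E.τ₁ : B) * E.y₁ + E.τ₂ * E.y₂ + E.τ₀)) * E.mono (i, j) := by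
      rw [← add_assoc, ← add_assoc, ← E.R1, mono, mono, pow_succ']
      noncomm_ring
    rw [hR1, add_mul, map_add, toPlaneₗ_linear_mul, hτ.1, hτ.2.1, hτ.2.2]
    simp only [add_mul, smul_mul_assoc, mul_assoc, map_add, map_smul, E.toPlaneₗ_y₁_mul hσ hδ,
      ih, toPlaneₗ_mono, zero_smul, add_zero, pow_succ']
    rw [← mul_assoc (Y 1) (Y 0), Y_one_mul_Y_zero]
    simp only [add_mul, smul_mul_assoc, mul_assoc]

include hσ hδ hτ in
theorem toPlaneₗ_y₂_mul (b : B) : E.toPlaneₗ ε (E.y₂ * b) = Y 1 * E.toPlaneₗ ε b := by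
  induction b using E.induction_on with
  | mono n => rw [E.toPlaneₗ_y₂_mul_mono hσ hδ hτ, toPlaneₗ_mono]
  | zero => simp
  | add x y hx hy => rw [mul_add, map_add, map_add, hx, hy, mul_add]
  | mul_left a x hx =>
    obtain ⟨h₂₁, h₂₂, hd⟩ := E.apply_R2₂_coeffs hσ hδ a
    rw [← mul_assoc, E.R2₂, toPlaneₗ_linear_mul, h₂₁, h₂₂, hd, hx, toPlaneₗ_coe_mul,
      mul_smul_comm]
    simp

include hσ hδ hτ in
theorem toPlaneₗ_mul (b b' : B) :
    E.toPlaneₗ ε (b * b') = E.toPlaneₗ ε b * E.toPlaneₗ ε b' := by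
  have hb : b ∈ Algebra.adjoin k ((A : Set B) ∪ {E.y₁, E.y₂}) := E.adjoin_eq_top ▸ trivial
  induction hb using Algebra.adjoin_induction generalizing b' with
  | mem x hx =>
    rcases hx with hx | rfl | rfl
    · rw [show x = ((⟨x, hx⟩ : A) : B) from rfl, toPlaneₗ_coe_mul, toPlaneₗ_coe,
        Algebra.smul_def]
    · rw [E.toPlaneₗ_y₁_mul hσ hδ, toPlaneₗ_y₁]
    · rw [E.toPlaneₗ_y₂_mul hσ hδ hτ, toPlaneₗ_y₂]
  | algebraMap c =>
    rw [Algebra.algebraMap_eq_smul_one, smul_mul_assoc, one_mul, map_smul, map_smul,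
      toPlaneₗ_one, smul_one_mul]
  | add x y _ _ hx hy => rw [add_mul, map_add, map_add, hx, hy, add_mul]
  | mul x y _ _ hx hy => rw [mul_assoc, hx, hy, hx, mul_assoc]

noncomputable def toPlane : B →ₐ[k] QuadraticPlane k E.p₁₂ E.p₁₁ :=
  AlgHom.ofLinearMap (E.toPlaneₗ ε) (E.toPlaneₗ_one ε) (E.toPlaneₗ_mul hσ hδ hτ)

theorem toPlane_apply (b : B) : E.toPlane hσ hδ hτ b = E.toPlaneₗ ε b := rfl

theorem toPlane_surjective : Function.Surjective (E.toPlane hσ hδ hτ) := by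
  rw [← AlgHom.range_eq_top, eq_top_iff, ← adjoin_range_Y, Algebra.adjoin_le_iff]
  rintro _ ⟨i, rfl⟩
  fin_cases i
  exacts [⟨E.y₁, E.toPlaneₗ_y₁ ε⟩, ⟨E.y₂, E.toPlaneₗ_y₂ ε⟩]

include hτ in
theorem coe_y₂_mul_coe_y₁ :
    (E.y₂ * E.y₁ : ε.extendedKer.ringCon.Quotient) =
      E.p₁₂ • ((E.y₁ : ε.extendedKer.ringCon.Quotient) * E.y₂)
        + E.p₁₁ • ((E.y₁ : ε.extendedKer.ringCon.Quotient) * E.y₁) := by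
  rw [← RingCon.coe_mul, E.R1]
  simp [ε.coe_coe_extendedKer, (RingHom.mem_ker).mp hτ.1, (RingHom.mem_ker).mp hτ.2.1,
    (RingHom.mem_ker).mp hτ.2.2]

noncomputable def planeToQuotient :
    QuadraticPlane k E.p₁₂ E.p₁₁ →ₐ[k] ε.extendedKer.ringCon.Quotient :=
  QuadraticPlane.lift _ _ (E.coe_y₂_mul_coe_y₁ hτ)

theorem planeToQuotient_comp_toPlane :
    (E.planeToQuotient hτ).comp (E.toPlane hσ hδ hτ) =
      RingCon.mkₐ k ε.extendedKer.ringCon := by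
  refine AlgHom.ext_of_adjoin_eq_top E.adjoin_eq_top fun x hx => ?_
  rcases hx with hx | rfl | rfl
  · lift x to A using hx
    simp [toPlane_apply, toPlaneₗ_coe, ε.coe_coe_extendedKer]
  · simp [toPlane_apply, toPlaneₗ_y₁, planeToQuotient]
  · simp [toPlane_apply, toPlaneₗ_y₂, planeToQuotient]

theorem toPlane_eq_zero_iff (b : B) : E.toPlane hσ hδ hτ b = 0 ↔ b ∈ ε.extendedKer := by
  refine ⟨fun h => ?_, fun hb => ?_⟩
  · have := congr($(E.planeToQuotient_comp_toPlane hσ hδ hτ) b)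
    rw [AlgHom.comp_apply, h, map_zero, RingCon.mkₐ_apply, eq_comm, ← RingCon.coe_zero,
      RingCon.eq] at this
    exact (TwoSidedIdeal.mem_iff _ _).mpr this
  · refine (TwoSidedIdeal.mem_ker _).mp (TwoSidedIdeal.span_le.mpr ?_ hb)
    rintro _ ⟨a, ha, rfl⟩
    simp [TwoSidedIdeal.mem_ker, toPlane_apply, toPlaneₗ_coe, (RingHom.mem_ker).mp ha]

end compatible

end RightDoubleExtension

/-- If `m = ker ε` is a `σ`-, `δ`-stable codimension-1 ideal of `A` containing the tail
`τ`, and `I` is the two-sided ideal of `B` generated by `m`, then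
`B/I ≅ k⟨Y₁,Y₂⟩/(Y₂Y₁ − p₁₂Y₁Y₂ − p₁₁Y₁²)`, with the images of `y₁, y₂` mapping to
`Y₁, Y₂`.  (The isomorphism is given as a surjective algebra map `π` with kernel `I`.) -/
theorem quotient_iso_free_quadratic
    {k : Type*} [Field k] {B : Type*} [Ring B] [Algebra k B]
    {A : Subalgebra k B} (E : RightDoubleExtension k A)
    (ε : A →ₐ[k] k)
    (hσ : ∀ a ∈ RingHom.ker ε, E.σ₁₁ a ∈ RingHom.ker ε ∧ E.σ₁₂ a ∈ RingHom.ker ε ∧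
        E.σ₂₁ a ∈ RingHom.ker ε ∧ E.σ₂₂ a ∈ RingHom.ker ε)
    (hδ : ∀ a ∈ RingHom.ker ε, E.δ₁ a ∈ RingHom.ker ε ∧ E.δ₂ a ∈ RingHom.ker ε)
    (hτ : E.τ₁ ∈ RingHom.ker ε ∧ E.τ₂ ∈ RingHom.ker ε ∧ E.τ₀ ∈ RingHom.ker ε) :
    ∃ π : B →ₐ[k] RingQuot (fun a b : FreeAlgebra k (Fin 2) =>
        a = FreeAlgebra.ι k 1 * FreeAlgebra.ι k 0 ∧
        b = E.p₁₂ • (FreeAlgebra.ι k 0 * FreeAlgebra.ι k 1)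
          + E.p₁₁ • (FreeAlgebra.ι k 0 * FreeAlgebra.ι k 0)),
      Function.Surjective π ∧
      (∀ b : B, π b = 0 ↔
        b ∈ TwoSidedIdeal.span ((fun a : A => (a : B)) '' (RingHom.ker ε : Set A))) ∧
      π E.y₁ = RingQuot.mkAlgHom k _ (FreeAlgebra.ι k 0) ∧
      π E.y₂ = RingQuot.mkAlgHom k _ (FreeAlgebra.ι k 1) :=
  ⟨E.toPlane hσ hδ hτ, E.toPlane_surjective hσ hδ hτ, E.toPlane_eq_zero_iff hσ hδ hτ,
    E.toPlaneₗ_y₁ ε, E.toPlaneₗ_y₂ ε⟩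
end

section
/- Let B be a right double extension of A with data (P, σ, δ, τ). Then det σ is a k-algebra endomorphism of A: det σ(1) = 1 and det σ(rs) = det σ(r)·det σ(s) for all r, s ∈ A. -/
/-- The determinant of `σ`: `det σ(r) = −p₁₁σ₁₂(σ₁₁(r)) + σ₂₂(σ₁₁(r)) − p₁₂σ₁₂(σ₂₁(r))`. -/
def RightDoubleExtension.detσ {k : Type*} [Field k] {B : Type*} [Ring B] [Algebra k B]
    {A : Subalgebra k B} (E : RightDoubleExtension k A) : A → A :=
  fun r => -(E.p₁₁ • E.σ₁₂ (E.σ₁₁ r)) + E.σ₂₂ (E.σ₁₁ r) - E.p₁₂ • E.σ₁₂ (E.σ₂₁ r)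

/-!
Comparing coefficients in `y (r s) = (y r) s` shows that `r ↦ (σᵢⱼ r)` is multiplicative
`A → M₂(A)`, hence so is `r ↦ (σᵢₐ (σⱼ_b r))_{(i,j),(a,b)}`, the matrix by which `r` moves past the
quadratic monomials `yᵢ yⱼ` modulo `F₁ = A + A y₁ + A y₂`. By (R1) the element
`u = y₂y₁ - p₁₂y₁y₂ - p₁₁y₁²` lies in `F₁`, hence so does `u r`; comparing the coefficients of
the basis monomials `y₁², y₁y₂, y₂²` shows that the coefficient vector of `u` is a left
eigenvector of that matrix with eigenvalue `det σ r`. Since the vector has an entry `1`,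
the eigenvalue is multiplicative.
-/

open Matrix

theorem map_mul_of_vecMul_eq_smul {M R n : Type*} [Mul M] [Semiring R] [Fintype n]
    (T : M → Matrix n n R) (hT : ∀ r s, T (r * s) = T r * T s) (w : n → R) (d : M → R)
    (hw : ∀ r, w ᵥ* T r = d r • w) (i : n) (hi : w i = 1) (r s : M) :
    d (r * s) = d r * d s := by
  have h := hw (r * s)
  rw [hT, ← vecMul_vecMul, hw r, smul_vecMul, hw s, smul_smul] at h
  simpa [hi] using (congr_fun h i).symm

namespace RightDoubleExtension

variable {k : Type*} [Field k] {B : Type*} [Ring B] [Algebra k B] {A : Subalgebra k B}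
  (E : RightDoubleExtension k A)

def y : Fin 2 → B := ![E.y₁, E.y₂]

def σ : Fin 2 → Fin 2 → A →ₗ[k] A := ![![E.σ₁₁, E.σ₁₂], ![E.σ₂₁, E.σ₂₂]]

def δ : Fin 2 → A →ₗ[k] A := ![E.δ₁, E.δ₂]

lemma y_mul (i : Fin 2) (r : A) : E.y i * r = ∑ j, (E.σ i j r : B) * E.y j + E.δ i r := by
  fin_cases i <;> simp [y, σ, δ, E.R2₁, E.R2₂]

lemma linearIndependent_monomial :
    LinearIndependent A fun n : ℕ × ℕ => E.y₁ ^ n.1 * E.y₂ ^ n.2 := by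
  rw [linearIndependent_iff]
  intro l hl
  obtain ⟨f, -, huniq⟩ := E.basis 0
  refine (huniq l ?_).trans (huniq 0 (by simp)).symm
  simpa [Finsupp.linearCombination_apply, Subalgebra.smul_def] using hl.symm

lemma eq_zero_of_quadratic_eq_zero {a₀ a₁ a₂ a₃ a₄ a₅ : A}
    (h : (a₀ : B) + a₁ * E.y₁ + a₂ * E.y₂ + a₃ * (E.y₁ * E.y₁) + a₄ * (E.y₁ * E.y₂)
      + a₅ * (E.y₂ * E.y₂) = 0) :
    a₀ = 0 ∧ a₁ = 0 ∧ a₂ = 0 ∧ a₃ = 0 ∧ a₄ = 0 ∧ a₅ = 0 := by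
  have := Fintype.linearIndependent_iff.mp
    (E.linearIndependent_monomial.comp ![(0, 0), (1, 0), (0, 1), (2, 0), (1, 1), (0, 2)]
      (by decide)) ![a₀, a₁, a₂, a₃, a₄, a₅]
    (by simpa [Fin.sum_univ_six, Subalgebra.smul_def, sq, add_assoc] using h)
  exact ⟨this 0, this 1, this 2, this 3, this 4, this 5⟩

lemma eq_zero_of_sum_mul_y_eq_coe (a : Fin 2 → A) (b : A) (h : ∑ j, (a j : B) * E.y j = b) :
    a = 0 := by
  obtain ⟨-, h₀, h₁, -⟩ := E.eq_zero_of_quadratic_eq_zero (a₀ := -b) (a₁ := a 0) (a₂ := a 1)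
    (a₃ := 0) (a₄ := 0) (a₅ := 0) (by simp [← h, y, Fin.sum_univ_two])
  ext j; fin_cases j <;> simp [h₀, h₁]

lemma σ_one (i j : Fin 2) : E.σ i j 1 = (1 : Matrix (Fin 2) (Fin 2) A) i j := by
  have h := E.y_mul i 1
  rw [OneMemClass.coe_one, mul_one] at h
  refine sub_eq_zero.mp (congr_fun (E.eq_zero_of_sum_mul_y_eq_coe
    (fun j => E.σ i j 1 - (1 : Matrix _ _ A) i j) (-E.δ i 1) ?_) j)
  fin_cases i <;> simp [Fin.sum_univ_two, Matrix.one_apply, sub_mul] at h ⊢ <;>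
    rw [← sub_eq_zero, ← sub_eq_zero.mpr h.symm] <;> noncomm_ring

lemma σ_mul (i j : Fin 2) (r s : A) : E.σ i j (r * s) = ∑ c, E.σ i c r * E.σ c j s := by
  have h : E.y i * ↑(r * s) = E.y i * r * s := by rw [Subalgebra.coe_mul, mul_assoc]
  rw [E.y_mul, E.y_mul, add_mul, Finset.sum_mul] at h
  simp only [mul_assoc, E.y_mul] at h
  have := E.eq_zero_of_sum_mul_y_eq_coe (fun j => E.σ i j (r * s) - ∑ c, E.σ i c r * E.σ c j s)
    (∑ c, E.σ i c r * E.δ c s + E.δ i r * s - E.δ i (r * s))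
    (by
      simp only [Fin.sum_univ_two] at h ⊢
      push_cast
      rw [← sub_eq_zero, ← sub_eq_zero.mpr h]
      noncomm_ring)
  exact sub_eq_zero.mp (congr_fun this j)

def σσ (r : A) : Matrix (Fin 2 × Fin 2) (Fin 2 × Fin 2) A :=
  Matrix.of fun p q => E.σ p.1 q.1 (E.σ p.2 q.2 r)

lemma σσ_mul (r s : A) : E.σσ (r * s) = E.σσ r * E.σσ s := by
  ext ⟨i, j⟩ ⟨a, b⟩ : 1
  simp only [σσ, Matrix.of_apply, Matrix.mul_apply, Fintype.sum_prod_type, σ_mul, map_sum]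
  exact Finset.sum_comm

def F₁ : Submodule A B := Submodule.span A (insert 1 (Set.range E.y))

lemma coe_mul_mem_F₁ (a : A) {x : B} (hx : x ∈ E.F₁) : (a : B) * x ∈ E.F₁ :=
  E.F₁.smul_mem a hx

lemma coe_mem_F₁ (a : A) : (a : B) ∈ E.F₁ := by
  simpa using E.coe_mul_mem_F₁ a (Submodule.subset_span (Set.mem_insert 1 _))

lemma y_mem_F₁ (i : Fin 2) : E.y i ∈ E.F₁ :=
  Submodule.subset_span (Set.mem_insert_of_mem _ ⟨i, rfl⟩)

lemma mul_coe_mem_F₁ {x : B} (hx : x ∈ E.F₁) (r : A) : x * r ∈ E.F₁ := by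
  induction hx using Submodule.span_induction with
  | mem x hx =>
    obtain rfl | ⟨i, rfl⟩ := hx
    · simpa using E.coe_mem_F₁ r
    · rw [E.y_mul]
      exact add_mem (sum_mem fun j _ => E.coe_mul_mem_F₁ _ (E.y_mem_F₁ j)) (E.coe_mem_F₁ _)
  | zero => simp
  | add x y _ _ hx hy => simpa [add_mul] using add_mem hx hy
  | smul a x _ hx => simpa [Subalgebra.smul_def, mul_assoc] using E.coe_mul_mem_F₁ a hx

lemma eq_zero_of_quadratic_mem_F₁ {a b c : A}
    (h : (a : B) * (E.y₁ * E.y₁) + b * (E.y₁ * E.y₂) + c * (E.y₂ * E.y₂) ∈ E.F₁) :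
    a = 0 ∧ b = 0 ∧ c = 0 := by
  obtain ⟨a₀, z, hz, hx⟩ := Submodule.mem_span_insert.mp h
  obtain ⟨d, rfl⟩ := (Submodule.mem_span_range_iff_exists_fun A).mp hz
  obtain ⟨-, -, -, ha, hb, hc⟩ := E.eq_zero_of_quadratic_eq_zero (a₀ := -a₀) (a₁ := -d 0)
    (a₂ := -d 1) (a₃ := a) (a₄ := b) (a₅ := c)
    (by
      simp only [Fin.sum_univ_two, Subalgebra.smul_def, smul_eq_mul, mul_one, y,
        Matrix.cons_val_zero, Matrix.cons_val_one] at hx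
      rw [← sub_eq_zero.mpr hx]
      push_cast
      noncomm_ring)
  exact ⟨ha, hb, hc⟩

def quad (p : Fin 2 × Fin 2) : B := E.y p.1 * E.y p.2

/-- The coefficients of `y₂y₁ - p₁₂y₁y₂ - p₁₁y₁y₁` on the monomials `quad p`. -/
def rel : Fin 2 × Fin 2 → A := fun p => ![![-(E.p₁₁ • 1), -(E.p₁₂ • 1)], ![1, 0]] p.1 p.2

lemma quad_mul_sub_mem_F₁ (p : Fin 2 × Fin 2) (r : A) :
    E.quad p * r - ∑ q, (E.σσ r p q : B) * E.quad q ∈ E.F₁ := by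
  obtain ⟨i, j⟩ := p
  have h : E.quad (i, j) * r = ∑ q, (E.σσ r (i, j) q : B) * E.quad q
      + (∑ b, (E.δ i (E.σ j b r) : B) * E.y b + E.y i * E.δ j r) := by
    rw [quad, mul_assoc, E.y_mul j]
    simp only [quad, σσ, Matrix.of_apply, Fintype.sum_prod_type, Fin.sum_univ_two, mul_add,
      ← mul_assoc, E.y_mul i, add_mul]
    noncomm_ring
  rw [h, add_sub_cancel_left]
  exact add_mem (sum_mem fun b _ => E.coe_mul_mem_F₁ _ (E.y_mem_F₁ b))
    (E.mul_coe_mem_F₁ (E.y_mem_F₁ i) _)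

lemma tau_mem_F₁ : (E.τ₁ : B) * E.y₁ + E.τ₂ * E.y₂ + E.τ₀ ∈ E.F₁ :=
  add_mem (add_mem (E.coe_mul_mem_F₁ _ (E.y_mem_F₁ 0)) (E.coe_mul_mem_F₁ _ (E.y_mem_F₁ 1)))
    (E.coe_mem_F₁ _)

lemma sum_rel_mul_quad_mem_F₁ : ∑ p, (E.rel p : B) * E.quad p ∈ E.F₁ := by
  have h : ∑ p, (E.rel p : B) * E.quad p = E.τ₁ * E.y₁ + E.τ₂ * E.y₂ + E.τ₀ := by
    simp [rel, quad, y, Fintype.sum_prod_type, E.R1]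
    abel
  exact h ▸ E.tau_mem_F₁

lemma eq_smul_rel_of_sum_mem_F₁ (c : Fin 2 × Fin 2 → A)
    (h : ∑ p, (c p : B) * E.quad p ∈ E.F₁) : c = c (1, 0) • E.rel := by
  have hsum : ∑ p, (c p : B) * E.quad p
      = ((c (0, 0) + E.p₁₁ • c (1, 0) : A) : B) * (E.y₁ * E.y₁)
        + ((c (0, 1) + E.p₁₂ • c (1, 0) : A) : B) * (E.y₁ * E.y₂)
        + (c (1, 1) : B) * (E.y₂ * E.y₂)
        + (c (1, 0) : B) * (E.τ₁ * E.y₁ + E.τ₂ * E.y₂ + E.τ₀) := by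
    simp only [quad, y, Fintype.sum_prod_type, Fin.sum_univ_two, Matrix.cons_val_zero,
      Matrix.cons_val_one, E.R1]
    push_cast
    simp only [mul_add, add_mul, mul_smul_comm, smul_mul_assoc]
    abel
  rw [hsum] at h
  obtain ⟨h₀₀, h₀₁, h₁₁⟩ := E.eq_zero_of_quadratic_mem_F₁
    ((Submodule.add_mem_iff_left _ (E.coe_mul_mem_F₁ _ E.tau_mem_F₁)).mp h)
  ext1 ⟨i, j⟩
  fin_cases i <;> fin_cases j <;>
    simp [rel, eq_neg_of_add_eq_zero_left h₀₀, eq_neg_of_add_eq_zero_left h₀₁, h₁₁]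

lemma rel_vecMul_σσ (r : A) : E.rel ᵥ* E.σσ r = E.detσ r • E.rel := by
  have hdet : (E.rel ᵥ* E.σσ r) (1, 0) = E.detσ r := by
    simp [vecMul, dotProduct, Fintype.sum_prod_type, rel, σσ, σ, detσ]
    abel
  have hsum : ∑ p, ((E.rel ᵥ* E.σσ r) p : B) * E.quad p
      = (∑ q, (E.rel q : B) * E.quad q) * r
        - ∑ q, (E.rel q : B) * (E.quad q * r - ∑ p, (E.σσ r q p : B) * E.quad p) := by
    simp only [vecMul, dotProduct]
    push_cast
    simp only [Finset.sum_mul, Finset.mul_sum, mul_sub, Finset.sum_sub_distrib, mul_assoc,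
      sub_sub_cancel]
    exact Finset.sum_comm
  rw [← hdet]
  refine E.eq_smul_rel_of_sum_mem_F₁ _ ?_
  rw [hsum]
  exact sub_mem (E.mul_coe_mem_F₁ E.sum_rel_mul_quad_mem_F₁ r)
    (sum_mem fun q _ => E.coe_mul_mem_F₁ _ (E.quad_mul_sub_mem_F₁ q r))

lemma detσ_one : E.detσ 1 = 1 := by
  have h₁₁ : E.σ₁₁ 1 = 1 := E.σ_one 0 0
  have h₁₂ : E.σ₁₂ 1 = 0 := E.σ_one 0 1
  have h₂₁ : E.σ₂₁ 1 = 0 := E.σ_one 1 0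
  have h₂₂ : E.σ₂₂ 1 = 1 := E.σ_one 1 1
  simp [detσ, h₁₁, h₁₂, h₂₁, h₂₂]

end RightDoubleExtension

/-- For a right double extension, `det σ` is a `k`-algebra endomorphism of `A`. -/
theorem detσ_algebra_endomorphism
    {k : Type*} [Field k] {B : Type*} [Ring B] [Algebra k B]
    {A : Subalgebra k B} (E : RightDoubleExtension k A) :
    E.detσ 1 = 1 ∧ ∀ r s : A, E.detσ (r * s) = E.detσ r * E.detσ s :=
  ⟨E.detσ_one, map_mul_of_vecMul_eq_smul E.σσ E.σσ_mul E.rel E.detσ E.rel_vecMul_σσ (1, 0) rfl⟩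
end

section
/- Let B be a right double extension of A with data (P, σ, δ, τ) such that p₁₂ ≠ 0 and det σ is bijective. Then σ has a right inverse: there exists a k-algebra homomorphism φ = (φᵢⱼ) : A → M₂(A) such that for all r ∈ A and all i, j ∈ {1,2}, σ₁ⱼ(φ₁ᵢ(r)) + σ₂ⱼ(φ₂ᵢ(r)) = r if i = j and = 0 if i ≠ j. -/
/-!
Comparing the coefficients of `y₁` and `y₂` in `yᵢ (r s) = (yᵢ r) s` shows that
`σ = (σᵢⱼ) : A → M₂(A)` is unital and multiplicative, and comparing the quadratic coefficients in
`y₂ (y₁ r) = (y₂ y₁) r` gives three relations between the composites `σᵢⱼ ∘ σₖₗ`. With these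
relations, a twisted adjugate `adj` of `σ`, whose entries are `k`-linear combinations of the
`σᵢⱼ`, is again multiplicative and satisfies `σ ∘ adj = det σ · I`. Hence `det σ` is an algebra
endomorphism of `A`, an automorphism when it is bijective, and `φ = adj ∘ (det σ)⁻¹` works.
-/

namespace RightDoubleExtension

variable {k : Type*} [Field k] {B : Type*} [Ring B] [Algebra k B] {A : Subalgebra k B}
  (E : RightDoubleExtension k A)

lemma monomialSum_injective :
    Function.Injective fun f : ℕ × ℕ →₀ A =>
      f.sum fun n a => (a : B) * (E.y₁ ^ n.1 * E.y₂ ^ n.2) :=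
  fun _ _ h => (E.basis _).unique rfl h

def quadPoly (c c₁ c₂ c₁₁ c₁₂ c₂₂ : A) : B :=
  c + c₁ * E.y₁ + c₂ * E.y₂ + c₁₁ * (E.y₁ * E.y₁) + c₁₂ * (E.y₁ * E.y₂) + c₂₂ * (E.y₂ * E.y₂)

lemma quadPoly_eq_monomialSum (c c₁ c₂ c₁₁ c₁₂ c₂₂ : A) :
    E.quadPoly c c₁ c₂ c₁₁ c₁₂ c₂₂ =
      (Finsupp.single (0, 0) c + Finsupp.single (1, 0) c₁ + Finsupp.single (0, 1) c₂ +
        Finsupp.single (2, 0) c₁₁ + Finsupp.single (1, 1) c₁₂ + Finsupp.single (0, 2) c₂₂).sum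
        fun n a => (a : B) * (E.y₁ ^ n.1 * E.y₂ ^ n.2) := by
  simp only [Finsupp.sum_add_index', ZeroMemClass.coe_zero, zero_mul, implies_true,
    AddMemClass.coe_add, add_mul, Finsupp.sum_single_index]
  simp [quadPoly, sq]

lemma quadPoly_inj {c c₁ c₂ c₁₁ c₁₂ c₂₂ d d₁ d₂ d₁₁ d₁₂ d₂₂ : A} :
    E.quadPoly c c₁ c₂ c₁₁ c₁₂ c₂₂ = E.quadPoly d d₁ d₂ d₁₁ d₁₂ d₂₂ ↔
      c = d ∧ c₁ = d₁ ∧ c₂ = d₂ ∧ c₁₁ = d₁₁ ∧ c₁₂ = d₁₂ ∧ c₂₂ = d₂₂ := by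
  refine ⟨fun h => ?_, by rintro ⟨rfl, rfl, rfl, rfl, rfl, rfl⟩; rfl⟩
  rw [quadPoly_eq_monomialSum, quadPoly_eq_monomialSum] at h
  have hcoeff := fun n => DFunLike.congr_fun (E.monomialSum_injective h) n
  refine ⟨?_, ?_, ?_, ?_, ?_, ?_⟩
  · simpa using hcoeff (0, 0)
  · simpa using hcoeff (1, 0)
  · simpa using hcoeff (0, 1)
  · simpa using hcoeff (2, 0)
  · simpa using hcoeff (1, 1)
  · simpa using hcoeff (0, 2)

lemma coe_mul_quadPoly (a c c₁ c₂ c₁₁ c₁₂ c₂₂ : A) :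
    (a : B) * E.quadPoly c c₁ c₂ c₁₁ c₁₂ c₂₂ =
      E.quadPoly (a * c) (a * c₁) (a * c₂) (a * c₁₁) (a * c₁₂) (a * c₂₂) := by
  simp only [quadPoly, Subalgebra.coe_mul]
  noncomm_ring

lemma quadPoly_add (c c₁ c₂ c₁₁ c₁₂ c₂₂ d d₁ d₂ d₁₁ d₁₂ d₂₂ : A) :
    E.quadPoly c c₁ c₂ c₁₁ c₁₂ c₂₂ + E.quadPoly d d₁ d₂ d₁₁ d₁₂ d₂₂ =
      E.quadPoly (c + d) (c₁ + d₁) (c₂ + d₂) (c₁₁ + d₁₁) (c₁₂ + d₁₂) (c₂₂ + d₂₂) := by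
  simp only [quadPoly, Subalgebra.coe_add]
  noncomm_ring

lemma smul_quadPoly (p : k) (c c₁ c₂ c₁₁ c₁₂ c₂₂ : A) :
    p • E.quadPoly c c₁ c₂ c₁₁ c₁₂ c₂₂ =
      E.quadPoly (p • c) (p • c₁) (p • c₂) (p • c₁₁) (p • c₁₂) (p • c₂₂) := by
  simp only [quadPoly, Subalgebra.coe_smul, smul_add, smul_mul_assoc]

lemma coe_eq_quadPoly (a : A) : (a : B) = E.quadPoly a 0 0 0 0 0 := by
  simp [quadPoly]

lemma mul_coe_eq_quadPoly {u : B} {α β γ : A → A}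
    (hu : ∀ r : A, u * r = α r * E.y₁ + β r * E.y₂ + γ r) (r : A) :
    u * r = E.quadPoly (γ r) (α r) (β r) 0 0 0 := by
  rw [hu]; simp only [quadPoly]; push_cast; noncomm_ring

lemma coeff_mul_of_commutation {u : B} {α β γ : A → A}
    (hu : ∀ r : A, u * r = α r * E.y₁ + β r * E.y₂ + γ r) (r s : A) :
    α (r * s) = α r * E.σ₁₁ s + β r * E.σ₂₁ s ∧
      β (r * s) = α r * E.σ₁₂ s + β r * E.σ₂₂ s := by
  have h : E.quadPoly (γ (r * s)) (α (r * s)) (β (r * s)) 0 0 0 =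
      E.quadPoly (α r * E.δ₁ s + β r * E.δ₂ s + γ r * s) (α r * E.σ₁₁ s + β r * E.σ₂₁ s)
        (α r * E.σ₁₂ s + β r * E.σ₂₂ s) 0 0 0 := by
    calc _ = u * ((r * s : A) : B) := (E.mul_coe_eq_quadPoly hu _).symm
      _ = α r * (E.y₁ * s) + β r * (E.y₂ * s) + γ r * s := by
        rw [Subalgebra.coe_mul, ← mul_assoc, hu]; noncomm_ring
      _ = _ := by rw [E.R2₁, E.R2₂]; simp only [quadPoly]; push_cast; noncomm_ring
  obtain ⟨-, hα, hβ, -⟩ := E.quadPoly_inj.1 h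
  exact ⟨hα, hβ⟩

lemma σ₁₁_mul (r s : A) : E.σ₁₁ (r * s) = E.σ₁₁ r * E.σ₁₁ s + E.σ₁₂ r * E.σ₂₁ s :=
  (E.coeff_mul_of_commutation E.R2₁ r s).1

lemma σ₁₂_mul (r s : A) : E.σ₁₂ (r * s) = E.σ₁₁ r * E.σ₁₂ s + E.σ₁₂ r * E.σ₂₂ s :=
  (E.coeff_mul_of_commutation E.R2₁ r s).2

lemma σ₂₁_mul (r s : A) : E.σ₂₁ (r * s) = E.σ₂₁ r * E.σ₁₁ s + E.σ₂₂ r * E.σ₂₁ s :=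
  (E.coeff_mul_of_commutation E.R2₂ r s).1

lemma σ₂₂_mul (r s : A) : E.σ₂₂ (r * s) = E.σ₂₁ r * E.σ₁₂ s + E.σ₂₂ r * E.σ₂₂ s :=
  (E.coeff_mul_of_commutation E.R2₂ r s).2

lemma σ_one_s10 : E.σ₁₁ 1 = 1 ∧ E.σ₁₂ 1 = 0 ∧ E.σ₂₁ 1 = 0 ∧ E.σ₂₂ 1 = 1 := by
  have h₁ : E.quadPoly (E.δ₁ 1) (E.σ₁₁ 1) (E.σ₁₂ 1) 0 0 0 = E.quadPoly 0 1 0 0 0 0 := by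
    rw [← E.mul_coe_eq_quadPoly E.R2₁]; simp [quadPoly]
  have h₂ : E.quadPoly (E.δ₂ 1) (E.σ₂₁ 1) (E.σ₂₂ 1) 0 0 0 = E.quadPoly 0 0 1 0 0 0 := by
    rw [← E.mul_coe_eq_quadPoly E.R2₂]; simp [quadPoly]
  obtain ⟨-, h₁₁, h₁₂, -⟩ := E.quadPoly_inj.1 h₁
  obtain ⟨-, h₂₁, h₂₂, -⟩ := E.quadPoly_inj.1 h₂
  exact ⟨h₁₁, h₁₂, h₂₁, h₂₂⟩

lemma mul_mul_coe_eq_quadPoly {u v : B} {α β γ α' β' γ' : A → A}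
    (hu : ∀ r : A, u * r = α r * E.y₁ + β r * E.y₂ + γ r)
    (hv : ∀ r : A, v * r = α' r * E.y₁ + β' r * E.y₂ + γ' r) (r : A) :
    u * (v * r) = E.quadPoly (γ (γ' r) + β (α' r) * E.τ₀)
      (γ (α' r) + α (γ' r) + β (α' r) * E.τ₁) (γ (β' r) + β (γ' r) + β (α' r) * E.τ₂)
      (α (α' r) + E.p₁₁ • β (α' r)) (α (β' r) + E.p₁₂ • β (α' r)) (β (β' r)) := by
  calc u * (v * r) = (u * α' r) * E.y₁ + (u * β' r) * E.y₂ + u * γ' r := by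
        rw [hv]; noncomm_ring
    _ = β (α' r) * (E.y₂ * E.y₁) + (α (α' r) * (E.y₁ * E.y₁) + γ (α' r) * E.y₁
          + α (β' r) * (E.y₁ * E.y₂) + β (β' r) * (E.y₂ * E.y₂) + γ (β' r) * E.y₂
          + α (γ' r) * E.y₁ + β (γ' r) * E.y₂ + γ (γ' r)) := by
        rw [hu, hu, hu]; noncomm_ring
    _ = _ := by
        rw [E.R1]
        simp only [quadPoly, Subalgebra.coe_add, Subalgebra.coe_mul, Subalgebra.coe_smul,
          mul_add, add_mul, smul_mul_assoc, mul_smul_comm, mul_assoc]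
        abel

lemma σ_quadratic_relations (r : A) :
    E.σ₂₁ (E.σ₁₁ r) + E.p₁₁ • E.σ₂₂ (E.σ₁₁ r) =
        E.p₁₂ • (E.σ₁₁ (E.σ₂₁ r) + E.p₁₁ • E.σ₁₂ (E.σ₂₁ r)) +
          E.p₁₁ • (E.σ₁₁ (E.σ₁₁ r) + E.p₁₁ • E.σ₁₂ (E.σ₁₁ r)) ∧
      E.σ₂₁ (E.σ₁₂ r) + E.p₁₂ • E.σ₂₂ (E.σ₁₁ r) =
        E.p₁₂ • (E.σ₁₁ (E.σ₂₂ r) + E.p₁₂ • E.σ₁₂ (E.σ₂₁ r)) +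
          E.p₁₁ • (E.σ₁₁ (E.σ₁₂ r) + E.p₁₂ • E.σ₁₂ (E.σ₁₁ r)) ∧
      E.σ₂₂ (E.σ₁₂ r) = E.p₁₂ • E.σ₁₂ (E.σ₂₂ r) + E.p₁₁ • E.σ₁₂ (E.σ₁₂ r) := by
  have hassoc : E.y₂ * (E.y₁ * r) =
      E.p₁₂ • (E.y₁ * (E.y₂ * r)) + E.p₁₁ • (E.y₁ * (E.y₁ * r)) +
        E.τ₁ * (E.y₁ * r) + E.τ₂ * (E.y₂ * r) + ((E.τ₀ * r : A) : B) := by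
    rw [← mul_assoc, E.R1]
    simp only [Subalgebra.coe_mul, add_mul, smul_mul_assoc, mul_assoc]
  rw [E.mul_mul_coe_eq_quadPoly E.R2₂ E.R2₁, E.mul_mul_coe_eq_quadPoly E.R2₁ E.R2₂,
    E.mul_mul_coe_eq_quadPoly E.R2₁ E.R2₁, E.mul_coe_eq_quadPoly E.R2₁,
    E.mul_coe_eq_quadPoly E.R2₂, smul_quadPoly, smul_quadPoly, coe_mul_quadPoly,
    coe_mul_quadPoly, E.coe_eq_quadPoly (_ * r), quadPoly_add, quadPoly_add, quadPoly_add,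
    quadPoly_add, quadPoly_inj] at hassoc
  obtain ⟨-, -, -, h₁₁, h₁₂, h₂₂⟩ := hassoc
  simp only [mul_zero, add_zero] at h₁₁ h₁₂ h₂₂
  exact ⟨h₁₁, h₁₂, h₂₂⟩

def detσₗ : A →ₗ[k] A :=
  -(E.p₁₁ • (E.σ₁₂ ∘ₗ E.σ₁₁)) + E.σ₂₂ ∘ₗ E.σ₁₁ - E.p₁₂ • (E.σ₁₂ ∘ₗ E.σ₂₁)

def adj₁₁ : A →ₗ[k] A := E.σ₂₂ + (E.p₁₁ * E.p₁₂⁻¹) • E.σ₁₂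

def adj₁₂ : A →ₗ[k] A :=
  -(E.p₁₂ • E.σ₂₁) - E.p₁₁ • E.σ₁₁ + E.p₁₁ • E.σ₂₂ + (E.p₁₁ * E.p₁₁ * E.p₁₂⁻¹) • E.σ₁₂

def adj₂₁ : A →ₗ[k] A := (-E.p₁₂⁻¹) • E.σ₁₂

def adj₂₂ : A →ₗ[k] A := E.σ₁₁ - (E.p₁₁ * E.p₁₂⁻¹) • E.σ₁₂

lemma σ_comp_adj (hp : E.p₁₂ ≠ 0) (u : A) :
    E.σ₁₁ (E.adj₁₁ u) + E.σ₂₁ (E.adj₂₁ u) = E.detσ u ∧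
      E.σ₁₂ (E.adj₁₁ u) + E.σ₂₂ (E.adj₂₁ u) = 0 ∧
      E.σ₁₁ (E.adj₁₂ u) + E.σ₂₁ (E.adj₂₂ u) = 0 ∧
      E.σ₁₂ (E.adj₁₂ u) + E.σ₂₂ (E.adj₂₂ u) = E.detσ u := by
  obtain ⟨h₁₁, h₁₂, h₂₂⟩ := E.σ_quadratic_relations u
  have h₁₂' := eq_sub_of_add_eq h₁₂
  have h₁₁' := eq_sub_of_add_eq h₁₁
  simp only [adj₁₁, adj₁₂, adj₂₁, adj₂₂, detσ, LinearMap.add_apply, LinearMap.smul_apply,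
    LinearMap.neg_apply, LinearMap.sub_apply, map_add, map_smul, map_neg,
    map_sub]
  refine ⟨?_, ?_, ?_, ?_⟩
  · rw [h₁₂']
    match_scalars <;> field_simp <;> ring
  · rw [h₂₂]
    match_scalars <;> field_simp <;> ring
  · rw [h₁₂', h₁₁']
    match_scalars <;> field_simp <;> ring
  · rw [h₂₂]
    match_scalars <;> field_simp <;> ring

lemma adj_mul (hp : E.p₁₂ ≠ 0) (u v : A) :
    E.adj₁₁ (u * v) = E.adj₁₁ u * E.adj₁₁ v + E.adj₁₂ u * E.adj₂₁ v ∧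
      E.adj₁₂ (u * v) = E.adj₁₁ u * E.adj₁₂ v + E.adj₁₂ u * E.adj₂₂ v ∧
      E.adj₂₁ (u * v) = E.adj₂₁ u * E.adj₁₁ v + E.adj₂₂ u * E.adj₂₁ v ∧
      E.adj₂₂ (u * v) = E.adj₂₁ u * E.adj₁₂ v + E.adj₂₂ u * E.adj₂₂ v := by
  simp only [adj₁₁, adj₁₂, adj₂₁, adj₂₂, LinearMap.add_apply, LinearMap.smul_apply,
    LinearMap.neg_apply, LinearMap.sub_apply, σ₁₁_mul, σ₁₂_mul, σ₂₁_mul, σ₂₂_mul,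
    smul_mul_assoc, mul_smul_comm, add_mul, mul_add, smul_smul, neg_mul, mul_neg, sub_mul,
    mul_sub, neg_smul, smul_neg, neg_neg, smul_add, smul_sub]
  refine ⟨?_, ?_, ?_, ?_⟩ <;> match_scalars <;> field_simp <;> ring

lemma adj_one :
    E.adj₁₁ 1 = 1 ∧ E.adj₁₂ 1 = 0 ∧ E.adj₂₁ 1 = 0 ∧ E.adj₂₂ 1 = 1 := by
  obtain ⟨h₁₁, h₁₂, h₂₁, h₂₂⟩ := E.σ_one_s10
  simp [adj₁₁, adj₁₂, adj₂₁, adj₂₂, h₁₁, h₁₂, h₂₁, h₂₂]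

lemma detσ_mul (hp : E.p₁₂ ≠ 0) (u v : A) : E.detσ (u * v) = E.detσ u * E.detσ v := by
  obtain ⟨hu, hu₁₂, hu₂₁, hu₂₂⟩ := E.σ_comp_adj hp u
  obtain ⟨hv, -, -, -⟩ := E.σ_comp_adj hp v
  obtain ⟨hmul₁₁, -, hmul₂₁, -⟩ := E.adj_mul hp u v
  rw [← (E.σ_comp_adj hp (u * v)).1, hmul₁₁, hmul₂₁, map_add, map_add, σ₁₁_mul, σ₁₁_mul,
    σ₂₁_mul, σ₂₁_mul, eq_neg_of_add_eq_zero_right hu₁₂, eq_neg_of_add_eq_zero_right hu₂₁,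
    eq_sub_of_add_eq' hu₂₂, ← hu, ← hv]
  noncomm_ring

def detσAlgHom (hp : E.p₁₂ ≠ 0) : A →ₐ[k] A :=
  AlgHom.ofLinearMap E.detσₗ (by simp [detσₗ, E.σ_one_s10]) (E.detσ_mul hp)

end RightDoubleExtension

/-- If `p₁₂ ≠ 0` and `det σ` is bijective, then `σ` has a right inverse: a `k`-algebra
homomorphism `φ = (φᵢⱼ) : A → M₂(A)` with `σ₁ⱼ(φ₁ᵢ(r)) + σ₂ⱼ(φ₂ᵢ(r)) = δᵢⱼ · r`. -/
theorem sigma_has_right_inverse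
    {k : Type*} [Field k] {B : Type*} [Ring B] [Algebra k B]
    {A : Subalgebra k B} (E : RightDoubleExtension k A)
    (hp : E.p₁₂ ≠ 0) (hdet : Function.Bijective E.detσ) :
    ∃ φ₁₁ φ₁₂ φ₂₁ φ₂₂ : A →ₗ[k] A,
      (φ₁₁ 1 = 1 ∧ φ₁₂ 1 = 0 ∧ φ₂₁ 1 = 0 ∧ φ₂₂ 1 = 1) ∧
      (∀ r s : A,
        φ₁₁ (r * s) = φ₁₁ r * φ₁₁ s + φ₁₂ r * φ₂₁ s ∧
        φ₁₂ (r * s) = φ₁₁ r * φ₁₂ s + φ₁₂ r * φ₂₂ s ∧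
        φ₂₁ (r * s) = φ₂₁ r * φ₁₁ s + φ₂₂ r * φ₂₁ s ∧
        φ₂₂ (r * s) = φ₂₁ r * φ₁₂ s + φ₂₂ r * φ₂₂ s) ∧
      (∀ r : A,
        E.σ₁₁ (φ₁₁ r) + E.σ₂₁ (φ₂₁ r) = r ∧
        E.σ₁₂ (φ₁₁ r) + E.σ₂₂ (φ₂₁ r) = 0 ∧
        E.σ₁₁ (φ₁₂ r) + E.σ₂₁ (φ₂₂ r) = 0 ∧
        E.σ₁₂ (φ₁₂ r) + E.σ₂₂ (φ₂₂ r) = r) := by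
  let e := AlgEquiv.ofBijective (E.detσAlgHom hp) hdet
  have he (r : A) : E.detσ (e.symm r) = r := e.apply_symm_apply r
  refine ⟨E.adj₁₁ ∘ₗ e.symm.toLinearMap, E.adj₁₂ ∘ₗ e.symm.toLinearMap,
    E.adj₂₁ ∘ₗ e.symm.toLinearMap, E.adj₂₂ ∘ₗ e.symm.toLinearMap, ?_, fun r s => ?_, fun r => ?_⟩
  · simpa using E.adj_one
  · simpa using E.adj_mul hp (e.symm r) (e.symm s)
  · simpa [he] using E.σ_comp_adj hp (e.symm r)
end

section
/- Let B be a trimmed right double extension of A with data (P, σ) and p₁₂ ≠ 0. Then for every r ∈ A the following two identities hold in B: (p₁₁y₁ − y₂)·σ₁₁(r) + p₁₂·y₁·σ₂₁(r) = det σ(r)·(p₁₁y₁ − y₂), and (p₁₁y₁ − y₂)·σ₁₂(r) + p₁₂·y₁·σ₂₂(r) = det σ(r)·p₁₂·y₁. (These identities say that the left B-module map g : B → B ⊕ B, c ↦ (c(p₁₁y₁ − y₂), c·p₁₂y₁), is a map of (B, A)-bimodules from B twisted on the right by det σ to (B ⊕ B) with right A-action (a, b) * r = (aσ₁₁(r)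 + bσ₂₁(r), aσ₁₂(r) + bσ₂₂(r)).) -/
namespace RightDoubleExtension

variable {k : Type*} [Field k] {B : Type*} [Ring B] [Algebra k B] {A : Subalgebra k B}
  (E : RightDoubleExtension k A)

lemma eq_zero_of_sum_monomial_eq_zero {f : ℕ × ℕ →₀ A}
    (h : (f.sum fun n a => (a : B) * (E.y₁ ^ n.1 * E.y₂ ^ n.2)) = 0) : f = 0 :=
  (E.basis 0).unique h.symm (by simp)

lemma eq_zero_of_quadratic_eq_zero_s11 {a b c : A}
    (h : (a : B) * E.y₁ ^ 2 + b * (E.y₁ * E.y₂) + c * E.y₂ ^ 2 = 0) :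
    a = 0 ∧ b = 0 ∧ c = 0 := by
  have hf := E.eq_zero_of_sum_monomial_eq_zero
    (f := Finsupp.single (2, 0) a + Finsupp.single (1, 1) b + Finsupp.single (0, 2) c) (by
      rw [Finsupp.sum_add_index' (by simp) (by simp [add_mul]),
        Finsupp.sum_add_index' (by simp) (by simp [add_mul])]
      simpa using h)
  exact ⟨by simpa using DFunLike.congr_fun hf (2, 0), by simpa using DFunLike.congr_fun hf (1, 1),
    by simpa using DFunLike.congr_fun hf (0, 2)⟩

lemma y₂_mul_y₁_of_tau_eq_zero (hτ₁ : E.τ₁ = 0) (hτ₂ : E.τ₂ = 0) (hτ₀ : E.τ₀ = 0) :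
    E.y₂ * E.y₁ = E.p₁₂ • (E.y₁ * E.y₂) + E.p₁₁ • (E.y₁ * E.y₁) := by
  simp [E.R1, hτ₁, hτ₂, hτ₀]

lemma y₁_mul_of_delta_eq_zero (hδ₁ : E.δ₁ = 0) (r : A) :
    E.y₁ * r = (E.σ₁₁ r : B) * E.y₁ + (E.σ₁₂ r : B) * E.y₂ := by
  simp [E.R2₁, hδ₁]

lemma y₂_mul_of_delta_eq_zero (hδ₂ : E.δ₂ = 0) (r : A) :
    E.y₂ * r = (E.σ₂₁ r : B) * E.y₁ + (E.σ₂₂ r : B) * E.y₂ := by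
  simp [E.R2₂, hδ₂]

lemma syzygy (hτ₁ : E.τ₁ = 0) (hτ₂ : E.τ₂ = 0) (hτ₀ : E.τ₀ = 0) :
    (E.p₁₁ • E.y₁ - E.y₂) * E.y₁ + E.p₁₂ • E.y₁ * E.y₂ = 0 := by
  simp only [sub_mul, smul_mul_assoc, E.y₂_mul_y₁_of_tau_eq_zero hτ₁ hτ₂ hτ₀]
  module

lemma syzygy_mul (hδ₁ : E.δ₁ = 0) (hδ₂ : E.δ₂ = 0) {u v : B}
    (h : u * E.y₁ + v * E.y₂ = 0) (r : A) :
    (u * E.σ₁₁ r + v * E.σ₂₁ r) * E.y₁ + (u * E.σ₁₂ r + v * E.σ₂₂ r) * E.y₂ = 0 :=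
  calc _ = u * (E.y₁ * r) + v * (E.y₂ * r) := by
        rw [E.y₁_mul_of_delta_eq_zero hδ₁, E.y₂_mul_of_delta_eq_zero hδ₂]; noncomm_ring
    _ = (u * E.y₁ + v * E.y₂) * r := by noncomm_ring
    _ = 0 := by rw [h, zero_mul]

lemma eq_neg_mul_syzygy_of_linear (hτ₁ : E.τ₁ = 0) (hτ₂ : E.τ₂ = 0) (hτ₀ : E.τ₀ = 0)
    {α β γ δ : A}
    (h : ((α : B) * E.y₁ + β * E.y₂) * E.y₁ + ((γ : B) * E.y₁ + δ * E.y₂) * E.y₂ = 0) :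
    (α : B) * E.y₁ + β * E.y₂ = -(β : B) * (E.p₁₁ • E.y₁ - E.y₂) ∧
      (γ : B) * E.y₁ + δ * E.y₂ = -(β : B) * (E.p₁₂ • E.y₁) := by
  obtain ⟨hα, hγ, hδ⟩ := E.eq_zero_of_quadratic_eq_zero_s11
    (a := α + E.p₁₁ • β) (b := E.p₁₂ • β + γ) (c := δ) (by
      rw [← h]
      simp only [add_mul, mul_assoc, E.y₂_mul_y₁_of_tau_eq_zero hτ₁ hτ₂ hτ₀,
        Subalgebra.coe_add, SetLike.val_smul, sq, mul_add, mul_smul_comm, smul_mul_assoc]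
      module)
  rw [add_eq_zero_iff_eq_neg] at hα
  rw [add_eq_zero_iff_eq_neg'] at hγ
  subst hα hγ hδ
  constructor <;>
    simp only [Subalgebra.coe_neg, SetLike.val_smul, Subalgebra.coe_zero, neg_mul, smul_mul_assoc,
      mul_sub, mul_smul_comm, zero_mul, add_zero] <;> module

lemma syzygy_mul_add_mul_eq (hδ₁ : E.δ₁ = 0) (hδ₂ : E.δ₂ = 0) (s t : A) :
    (E.p₁₁ • E.y₁ - E.y₂) * s + E.p₁₂ • E.y₁ * t =
      ((E.p₁₁ • E.σ₁₁ s - E.σ₂₁ s + E.p₁₂ • E.σ₁₁ t : A) : B) * E.y₁ +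
        ((E.p₁₁ • E.σ₁₂ s - E.σ₂₂ s + E.p₁₂ • E.σ₁₂ t : A) : B) * E.y₂ := by
  simp only [add_mul, sub_mul, smul_mul_assoc, E.y₁_mul_of_delta_eq_zero hδ₁,
    E.y₂_mul_of_delta_eq_zero hδ₂, Subalgebra.coe_add, Subalgebra.coe_sub, SetLike.val_smul]
  module

end RightDoubleExtension

theorem trimmed_g_bimodule_identities_general
    {k : Type*} [Field k] {B : Type*} [Ring B] [Algebra k B]
    {A : Subalgebra k B} (E : RightDoubleExtension k A)
    (hδ₁ : E.δ₁ = 0) (hδ₂ : E.δ₂ = 0)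
    (hτ₁ : E.τ₁ = 0) (hτ₂ : E.τ₂ = 0) (hτ₀ : E.τ₀ = 0) :
    ∀ r : A,
      (E.p₁₁ • E.y₁ - E.y₂) * (E.σ₁₁ r : B) + E.p₁₂ • (E.y₁ * (E.σ₂₁ r : B)) =
        (E.detσ r : B) * (E.p₁₁ • E.y₁ - E.y₂) ∧
      (E.p₁₁ • E.y₁ - E.y₂) * (E.σ₁₂ r : B) + E.p₁₂ • (E.y₁ * (E.σ₂₂ r : B)) =
        (E.detσ r : B) * (E.p₁₂ • E.y₁) := by
  intro r
  have hX := E.syzygy_mul_add_mul_eq hδ₁ hδ₂ (E.σ₁₁ r) (E.σ₂₁ r)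
  have hY := E.syzygy_mul_add_mul_eq hδ₁ hδ₂ (E.σ₁₂ r) (E.σ₂₂ r)
  have hrel := E.syzygy_mul hδ₁ hδ₂ (E.syzygy hτ₁ hτ₂ hτ₀) r
  rw [hX, hY] at hrel
  obtain ⟨hX', hY'⟩ := E.eq_neg_mul_syzygy_of_linear hτ₁ hτ₂ hτ₀ hrel
  have hdet : -(E.p₁₁ • E.σ₁₂ (E.σ₁₁ r) - E.σ₂₂ (E.σ₁₁ r) + E.p₁₂ • E.σ₁₂ (E.σ₂₁ r)) =
      E.detσ r := by
    rw [RightDoubleExtension.detσ]; abel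
  rw [← smul_mul_assoc, ← smul_mul_assoc, ← hdet, Subalgebra.coe_neg]
  exact ⟨hX.trans hX', hY.trans hY'⟩

/-- In a trimmed right double extension with `p₁₂ ≠ 0`, the map
`g : c ↦ (c(p₁₁y₁ − y₂), c·p₁₂y₁)` intertwines the twisted right `A`-actions: for all
`r ∈ A`, `(p₁₁y₁ − y₂)σ₁₁(r) + p₁₂y₁σ₂₁(r) = det σ(r)·(p₁₁y₁ − y₂)` and
`(p₁₁y₁ − y₂)σ₁₂(r) + p₁₂y₁σ₂₂(r) = det σ(r)·p₁₂y₁`. -/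
theorem trimmed_g_bimodule_identities
    {k : Type*} [Field k] {B : Type*} [Ring B] [Algebra k B]
    {A : Subalgebra k B} (E : RightDoubleExtension k A)
    (hδ₁ : E.δ₁ = 0) (hδ₂ : E.δ₂ = 0)
    (hτ₁ : E.τ₁ = 0) (hτ₂ : E.τ₂ = 0) (hτ₀ : E.τ₀ = 0)
    (hp : E.p₁₂ ≠ 0) :
    ∀ r : A,
      (E.p₁₁ • E.y₁ - E.y₂) * (E.σ₁₁ r : B) + E.p₁₂ • (E.y₁ * (E.σ₂₁ r : B)) =
        (E.detσ r : B) * (E.p₁₁ • E.y₁ - E.y₂) ∧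
      (E.p₁₁ • E.y₁ - E.y₂) * (E.σ₁₂ r : B) + E.p₁₂ • (E.y₁ * (E.σ₂₂ r : B)) =
        (E.detσ r : B) * (E.p₁₂ • E.y₁) :=
  trimmed_g_bimodule_identities_general E hδ₁ hδ₂ hτ₁ hτ₂ hτ₀
end

section
/- (a) There is a k-algebra automorphism f of B(h) determined by f(x₁) = x₂, f(x₂) = −x₁, f(y₁) = y₂, f(y₂) = −y₁. (b) There is a k-algebra isomorphism g : B(h) → B(h)ᵒᵖ (the opposite algebra) determined by g(x₁) = y₁, g(x₂) = y₂, g(y₁) = x₁, g(y₂) = x₂; equivalently, B(h) has an anti-automorphism exchanging x₁ ↔ y₁ and x₂ ↔ y₂. -/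
/-- The six defining relations of the algebra `B(h)`, on the free algebra on four
generators `x₁ = X 0`, `x₂ = X 1`, `y₁ = X 2`, `y₂ = X 3`. -/
def bhRel (k : Type*) [Field k] (h : k) :
    FreeAlgebra k (Fin 4) → FreeAlgebra k (Fin 4) → Prop := fun a b =>
  (a = FreeAlgebra.ι k 1 * FreeAlgebra.ι k 0 ∧
    b = -(FreeAlgebra.ι k 0 * FreeAlgebra.ι k 1)) ∨
  (a = FreeAlgebra.ι k 3 * FreeAlgebra.ι k 2 ∧
    b = -(FreeAlgebra.ι k 2 * FreeAlgebra.ι k 3)) ∨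
  (a = FreeAlgebra.ι k 2 * FreeAlgebra.ι k 0 ∧
    b = h • (FreeAlgebra.ι k 0 * FreeAlgebra.ι k 2 + FreeAlgebra.ι k 1 * FreeAlgebra.ι k 2
      + FreeAlgebra.ι k 0 * FreeAlgebra.ι k 3)) ∨
  (a = FreeAlgebra.ι k 2 * FreeAlgebra.ι k 1 ∧
    b = h • (FreeAlgebra.ι k 0 * FreeAlgebra.ι k 3)) ∨
  (a = FreeAlgebra.ι k 3 * FreeAlgebra.ι k 0 ∧
    b = h • (FreeAlgebra.ι k 1 * FreeAlgebra.ι k 2)) ∨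
  (a = FreeAlgebra.ι k 3 * FreeAlgebra.ι k 1 ∧
    b = h • (-(FreeAlgebra.ι k 1 * FreeAlgebra.ι k 2) - FreeAlgebra.ι k 0 * FreeAlgebra.ι k 3
      + FreeAlgebra.ι k 1 * FreeAlgebra.ι k 3))

/-- The algebra `B(h)`: the quotient of `k⟨x₁,x₂,y₁,y₂⟩` by the two-sided ideal
generated by the six relations. -/
abbrev Bh (k : Type*) [Field k] (h : k) := RingQuot (bhRel k h)

/-- The generator `x₁` of `B(h)`. -/
def bX₁ (k : Type*) [Field k] (h : k) : Bh k h :=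
  RingQuot.mkAlgHom k (bhRel k h) (FreeAlgebra.ι k 0)

/-- The generator `x₂` of `B(h)`. -/
def bX₂ (k : Type*) [Field k] (h : k) : Bh k h :=
  RingQuot.mkAlgHom k (bhRel k h) (FreeAlgebra.ι k 1)

/-- The generator `y₁` of `B(h)`. -/
def bY₁ (k : Type*) [Field k] (h : k) : Bh k h :=
  RingQuot.mkAlgHom k (bhRel k h) (FreeAlgebra.ι k 2)

/-- The generator `y₂` of `B(h)`. -/
def bY₂ (k : Type*) [Field k] (h : k) : Bh k h :=
  RingQuot.mkAlgHom k (bhRel k h) (FreeAlgebra.ι k 3)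

/-!
The defining relations of `B(h)` are preserved by the substitution `x₁ ↦ x₂ ↦ -x₁`,
`y₁ ↦ y₂ ↦ -y₁`, and also by exchanging `x` with `y` while reversing all products. By the
universal property of the quotient each substitution defines an algebra map, into `B(h)` and
into `B(h)ᵐᵒᵖ` respectively. The first has order four; the second is an involution, so its
inverse is the same map read as a map out of `B(h)ᵐᵒᵖ`.
-/

namespace Bh

open MulOpposite

variable {k : Type*} [Field k] {h : k}

structure Relations {A : Type*} [Ring A] [Algebra k A] (h : k) (x₁ x₂ y₁ y₂ : A) : Prop where
  x₂_mul_x₁ : x₂ * x₁ = -(x₁ * x₂)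
  y₂_mul_y₁ : y₂ * y₁ = -(y₁ * y₂)
  y₁_mul_x₁ : y₁ * x₁ = h • (x₁ * y₁ + x₂ * y₁ + x₁ * y₂)
  y₁_mul_x₂ : y₁ * x₂ = h • (x₁ * y₂)
  y₂_mul_x₁ : y₂ * x₁ = h • (x₂ * y₁)
  y₂_mul_x₂ : y₂ * x₂ = h • (-(x₂ * y₁) - x₁ * y₂ + x₂ * y₂)

namespace Relations

variable {A : Type*} [Ring A] [Algebra k A] {x₁ x₂ y₁ y₂ : A}

theorem rotate (H : Relations h x₁ x₂ y₁ y₂) : Relations h x₂ (-x₁) y₂ (-y₁) where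
  x₂_mul_x₁ := by simp only [neg_mul, mul_neg, neg_neg, H.x₂_mul_x₁]
  y₂_mul_y₁ := by simp only [neg_mul, mul_neg, neg_neg, H.y₂_mul_y₁]
  y₁_mul_x₁ := by simp only [neg_mul, mul_neg, H.y₂_mul_x₂]; module
  y₁_mul_x₂ := by simp only [mul_neg, H.y₂_mul_x₁]; module
  y₂_mul_x₁ := by simp only [neg_mul, H.y₁_mul_x₂]; module
  y₂_mul_x₂ := by simp only [neg_mul, mul_neg, neg_neg, H.y₁_mul_x₁]; module

theorem op (H : Relations h x₁ x₂ y₁ y₂) : Relations h (op y₁) (op y₂) (op x₁) (op x₂) where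
  x₂_mul_x₁ := unop_injective <| by
    simp only [unop_mul, unop_op, unop_neg, H.y₂_mul_y₁, neg_neg]
  y₂_mul_y₁ := unop_injective <| by
    simp only [unop_mul, unop_op, unop_neg, H.x₂_mul_x₁, neg_neg]
  y₁_mul_x₁ := unop_injective <| by
    simp only [unop_mul, unop_op, unop_add, unop_smul, H.y₁_mul_x₁]; module
  y₁_mul_x₂ := unop_injective <| by simp only [unop_mul, unop_op, unop_smul, H.y₂_mul_x₁]
  y₂_mul_x₁ := unop_injective <| by simp only [unop_mul, unop_op, unop_smul, H.y₁_mul_x₂]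
  y₂_mul_x₂ := unop_injective <| by
    simp only [unop_mul, unop_op, unop_add, unop_sub, unop_neg, unop_smul, H.y₂_mul_x₂]; module

end Relations

theorem relations_generators (k : Type*) [Field k] (h : k) :
    Relations h (bX₁ k h) (bX₂ k h) (bY₁ k h) (bY₂ k h) := by
  have rel {a b} (hab : bhRel k h a b) := RingQuot.mkAlgHom_rel k hab
  refine ⟨?_, ?_, ?_, ?_, ?_, ?_⟩ <;>
    simp only [bX₁, bX₂, bY₁, bY₂, ← map_mul, ← map_neg, ← map_add, ← map_sub, ← map_smul]
  exacts [rel (.inl ⟨rfl, rfl⟩), rel (.inr <| .inl ⟨rfl, rfl⟩),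
    rel (.inr <| .inr <| .inl ⟨rfl, rfl⟩), rel (.inr <| .inr <| .inr <| .inl ⟨rfl, rfl⟩),
    rel (.inr <| .inr <| .inr <| .inr <| .inl ⟨rfl, rfl⟩),
    rel (.inr <| .inr <| .inr <| .inr <| .inr ⟨rfl, rfl⟩)]

variable {A : Type*} [Ring A] [Algebra k A] {x₁ x₂ y₁ y₂ : A}

theorem bhRel_lift (H : Relations h x₁ x₂ y₁ y₂) ⦃a b : FreeAlgebra k (Fin 4)⦄
    (hab : bhRel k h a b) : FreeAlgebra.lift k ![x₁, x₂, y₁, y₂] a =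
      FreeAlgebra.lift k ![x₁, x₂, y₁, y₂] b := by
  obtain ⟨rfl, rfl⟩ | ⟨rfl, rfl⟩ | ⟨rfl, rfl⟩ | ⟨rfl, rfl⟩ | ⟨rfl, rfl⟩ | ⟨rfl, rfl⟩ := hab <;>
    simp only [map_mul, map_add, map_sub, map_neg, map_smul, FreeAlgebra.lift_ι_apply,
      Matrix.cons_val]
  exacts [H.x₂_mul_x₁, H.y₂_mul_y₁, H.y₁_mul_x₁, H.y₁_mul_x₂, H.y₂_mul_x₁, H.y₂_mul_x₂]

variable (k) in
def lift (H : Relations h x₁ x₂ y₁ y₂) : Bh k h →ₐ[k] A :=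
  RingQuot.liftAlgHom k ⟨FreeAlgebra.lift k ![x₁, x₂, y₁, y₂], bhRel_lift H⟩

section lift

variable (H : Relations h x₁ x₂ y₁ y₂)

@[simp] theorem lift_bX₁ : lift k H (bX₁ k h) = x₁ := by
  simp [lift, bX₁, RingQuot.liftAlgHom_mkAlgHom_apply]

@[simp] theorem lift_bX₂ : lift k H (bX₂ k h) = x₂ := by
  simp [lift, bX₂, RingQuot.liftAlgHom_mkAlgHom_apply]

@[simp] theorem lift_bY₁ : lift k H (bY₁ k h) = y₁ := by
  simp [lift, bY₁, RingQuot.liftAlgHom_mkAlgHom_apply]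

@[simp] theorem lift_bY₂ : lift k H (bY₂ k h) = y₂ := by
  simp [lift, bY₂, RingQuot.liftAlgHom_mkAlgHom_apply]

end lift

theorem hom_ext {B : Type*} [Semiring B] [Algebra k B] {f g : Bh k h →ₐ[k] B}
    (hx₁ : f (bX₁ k h) = g (bX₁ k h)) (hx₂ : f (bX₂ k h) = g (bX₂ k h))
    (hy₁ : f (bY₁ k h) = g (bY₁ k h)) (hy₂ : f (bY₂ k h) = g (bY₂ k h)) : f = g := by
  refine RingQuot.ringQuot_ext' _ _ _ <| FreeAlgebra.hom_ext <| funext fun i => ?_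
  fin_cases i
  exacts [hx₁, hx₂, hy₁, hy₂]

variable (k h)

def rotateHom : Bh k h →ₐ[k] Bh k h := lift k (relations_generators k h).rotate

theorem rotateHom_pow_four :
    (rotateHom k h).comp ((rotateHom k h).comp ((rotateHom k h).comp (rotateHom k h))) =
      AlgHom.id k (Bh k h) := by
  apply hom_ext <;> simp [rotateHom]

def rotate : Bh k h ≃ₐ[k] Bh k h :=
  .ofAlgHom (rotateHom k h) ((rotateHom k h).comp ((rotateHom k h).comp (rotateHom k h)))
    (rotateHom_pow_four k h) (rotateHom_pow_four k h)

def swapOpHom : Bh k h →ₐ[k] (Bh k h)ᵐᵒᵖ := lift k (relations_generators k h).op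

theorem opComm_swapOpHom_comp_swapOpHom :
    (AlgHom.opComm (swapOpHom k h)).comp (swapOpHom k h) = AlgHom.id k (Bh k h) := by
  apply hom_ext <;> simp [swapOpHom]

theorem swapOpHom_comp_opComm_swapOpHom :
    (swapOpHom k h).comp (AlgHom.opComm (swapOpHom k h)) = AlgHom.id k (Bh k h)ᵐᵒᵖ :=
  AlgHom.op.symm.injective <| by
    apply hom_ext <;> simp [swapOpHom, AlgHom.op]

def swapOp : Bh k h ≃ₐ[k] (Bh k h)ᵐᵒᵖ :=
  .ofAlgHom (swapOpHom k h) (AlgHom.opComm (swapOpHom k h))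
    (swapOpHom_comp_opComm_swapOpHom k h) (opComm_swapOpHom_comp_swapOpHom k h)

end Bh

theorem Bh_automorphism_antiautomorphism_general (k : Type*) [Field k] (h : k) :
    (∃ f : Bh k h ≃ₐ[k] Bh k h,
      f (bX₁ k h) = bX₂ k h ∧ f (bX₂ k h) = -bX₁ k h ∧
      f (bY₁ k h) = bY₂ k h ∧ f (bY₂ k h) = -bY₁ k h) ∧
    (∃ g : Bh k h ≃ₐ[k] (Bh k h)ᵐᵒᵖ,
      g (bX₁ k h) = MulOpposite.op (bY₁ k h) ∧ g (bX₂ k h) = MulOpposite.op (bY₂ k h) ∧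
      g (bY₁ k h) = MulOpposite.op (bX₁ k h) ∧ g (bY₂ k h) = MulOpposite.op (bX₂ k h)) :=
  ⟨⟨Bh.rotate k h, by simp [Bh.rotate, Bh.rotateHom]⟩,
    ⟨Bh.swapOp k h, by simp [Bh.swapOp, Bh.swapOpHom]⟩⟩

/-- `B(h)` has an automorphism `f` with `f(x₁) = x₂`, `f(x₂) = −x₁`, `f(y₁) = y₂`,
`f(y₂) = −y₁`, and an anti-automorphism (an isomorphism onto the opposite algebra)
`g` with `g(x₁) = y₁`, `g(x₂) = y₂`, `g(y₁) = x₁`, `g(y₂) = x₂`. -/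
theorem Bh_automorphism_antiautomorphism (k : Type*) [Field k] (h : k) (hh : h ≠ 0) :
    (∃ f : Bh k h ≃ₐ[k] Bh k h,
      f (bX₁ k h) = bX₂ k h ∧ f (bX₂ k h) = -bX₁ k h ∧
      f (bY₁ k h) = bY₂ k h ∧ f (bY₂ k h) = -bY₁ k h) ∧
    (∃ g : Bh k h ≃ₐ[k] (Bh k h)ᵐᵒᵖ,
      g (bX₁ k h) = MulOpposite.op (bY₁ k h) ∧ g (bX₂ k h) = MulOpposite.op (bY₂ k h) ∧
      g (bY₁ k h) = MulOpposite.op (bX₁ k h) ∧ g (bY₂ k h) = MulOpposite.op (bX₂ k h)) :=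
  Bh_automorphism_antiautomorphism_general k h
end
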